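/- arXiv:1507.01561 — 15 statements merged into one kernel-verified Lean document; each statement's English description precedes it below -/
import Mathlib

section
/- The set {x ∈ (0,1) : f_C(x) = f_A(x)} has at most two elements; that is, the replicator equation ẋ = x(1−x)(f_C(x) − f_A(x)) has at most two fixed points in the open interval (0,1). -/
/-- A quadratic with nonzero leading coefficient: any root equals one of two
given distinct roots. -/
lemma quad_roots {A B C : ℝ} (hA : A ≠ 0) {x y z : ℝ}
    (hx : A * x ^ 2 + B * x + C = 0) (hy : A * y ^ 2 + B * y + C = 0)
    (hz : A * z ^ 2 + B * z + C = 0) (hxy : x ≠ y) : z = x ∨ z = y := by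
  have hxy' : A * (x + y) + B = 0 := by
    have h : (x - y) * (A * (x + y) + B) = 0 := by nlinarith [hx, hy]
    rcases mul_eq_zero.1 h with h | h
    · exact absurd (sub_eq_zero.1 h) hxy
    · exact h
  by_cases hzx : z = x
  · exact Or.inl hzx
  · right
    have hzx' : A * (z + x) + B = 0 := by
      have h : (z - x) * (A * (z + x) + B) = 0 := by nlinarith [hz, hx]
      rcases mul_eq_zero.1 h with h | h
      · exact absurd (sub_eq_zero.1 h) hzx
      · exact h
    have : A * (z - y) = 0 := by linarith
    rcases mul_eq_zero.1 this with h | h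
    · exact absurd h hA
    · exact sub_eq_zero.1 h

/-- The replicator equation ẋ = x(1−x)(f_C(x) − f_A(x)) has at most two fixed
points in the open interval (0,1): the set {x ∈ (0,1) : f_C(x) = f_A(x)} has at
most two elements. -/
theorem at_most_two_interior_fixed_points
    (a ρ β : ℝ) (ha : 0 < a) (hρ0 : 0 < ρ) (hρ1 : ρ ≤ 1) (hβ0 : 0 < β) (hβ1 : β < 1)
    (fA fC : ℝ → ℝ)
    (hfA : ∀ y, fA y = ρ * (1 + β * y) / (a + 1))
    (hfC : ∀ y, fC y = ρ * (1 - β * (1 - y)) / (a + ρ * (1 - β * (1 - y)))) :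
    {x : ℝ | x ∈ Set.Ioo (0 : ℝ) 1 ∧ fC x = fA x}.encard ≤ 2 := by
  set A : ℝ := -(ρ * β ^ 2) with hAdef
  set B : ℝ := β * (1 - 2 * ρ + ρ * β) with hBdef
  set C : ℝ := (a + 1) * (1 - β) - a - ρ * (1 - β) with hCdef
  have hA : A ≠ 0 := by
    simp only [hAdef, neg_ne_zero]
    positivity
  set s := {x : ℝ | x ∈ Set.Ioo (0 : ℝ) 1 ∧ fC x = fA x} with hs
  -- every element of s is a root of the quadratic
  have key : ∀ x ∈ s, A * x ^ 2 + B * x + C = 0 := by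
    intro x hx
    obtain ⟨⟨hx0, hx1⟩, heq⟩ := hx
    rw [hfC, hfA] at heq
    have hu : 0 < 1 - β * (1 - x) := by nlinarith
    have hden : a + ρ * (1 - β * (1 - x)) ≠ 0 := by positivity
    have hden1 : a + (1 : ℝ) ≠ 0 := by positivity
    field_simp at heq
    have hQ : ρ * (A * x ^ 2 + B * x + C) = 0 := by
      simp only [hAdef, hBdef, hCdef]
      linear_combination ρ * heq
    rcases mul_eq_zero.1 hQ with h | h
    · exact absurd h (ne_of_gt hρ0)
    · exact h
  by_contra h
  push_neg at h
  have h1 : (1 : ℕ∞) < s.encard := lt_trans (by norm_num) h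
  obtain ⟨x, y, hxs, hys, hxy⟩ := Set.one_lt_encard_iff.1 h1
  have hsub : s ⊆ {x, y} := by
    intro z hzs
    rcases quad_roots hA (key x hxs) (key y hys) (key z hzs) hxy with h | h
    · exact Or.inl h
    · exact Or.inr h
  have : s.encard ≤ 2 := le_trans (Set.encard_le_encard hsub)
    (by rw [Set.encard_pair hxy])
  exact absurd this (not_le.2 h)
end

section
/- Controlled agents outperform automatic agents when controlled agents are rare, i.e. f_C(0) > f_A(0), if and only if aβ < (1 − β)(1 − ρ). (This inequality locates the transcritical bifurcation at x = 0 in the (β, ρ) parameter plane.) -/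
/-- Controlled agents outperform automatic agents when rare, f_C(0) > f_A(0),
iff aβ < (1 − β)(1 − ρ). -/
theorem transcritical_at_zero
    (a ρ β : ℝ) (ha : 0 < a) (hρ0 : 0 < ρ) (hρ1 : ρ ≤ 1) (hβ0 : 0 < β) (hβ1 : β < 1)
    (fA fC : ℝ → ℝ)
    (hfA : ∀ y, fA y = ρ * (1 + β * y) / (a + 1))
    (hfC : ∀ y, fC y = ρ * (1 - β * (1 - y)) / (a + ρ * (1 - β * (1 - y)))) :
    fC 0 > fA 0 ↔ a * β < (1 - β) * (1 - ρ) := by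
  rw [hfA, hfC]
  have h1 : (0:ℝ) < a + 1 := by linarith
  have h2 : (0:ℝ) < a + ρ * (1 - β * (1 - 0)) := by nlinarith
  rw [gt_iff_lt, div_lt_div_iff₀ h1 h2]
  constructor <;> intro h <;> nlinarith
end

section
/- Controlled agents outperform automatic agents when controlled agents are common, i.e. f_C(1) > f_A(1), if and only if ρ(1 + β) < 1 − aβ. (This inequality locates the transcritical bifurcation at x = 1 in the (β, ρ) parameter plane.) -/
/-- Controlled agents outperform automatic agents when common, f_C(1) > f_A(1),
iff ρ(1 + β) < 1 − aβ. -/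
theorem transcritical_at_one
    (a ρ β : ℝ) (ha : 0 < a) (hρ0 : 0 < ρ) (hρ1 : ρ ≤ 1) (hβ0 : 0 < β) (hβ1 : β < 1)
    (fA fC : ℝ → ℝ)
    (hfA : ∀ y, fA y = ρ * (1 + β * y) / (a + 1))
    (hfC : ∀ y, fC y = ρ * (1 - β * (1 - y)) / (a + ρ * (1 - β * (1 - y)))) :
    fC 1 > fA 1 ↔ ρ * (1 + β) < 1 - a * β := by
  rw [hfA, hfC]
  norm_num
  rw [div_lt_div_iff₀ (by positivity) (by positivity)]
  constructor <;> intro h <;> nlinarith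
end

section
/- Controlled processing dominates for every population composition, i.e. f_C(x) > f_A(x) for all x ∈ [0,1], if and only if both endpoint conditions hold: f_C(0) > f_A(0) and f_C(1) > f_A(1). (Equivalently, control dominates if and only if aβ < (1 − β)(1 − ρ) and ρ(1 + β) < 1 − aβ.) -/
/-- Control dominates for every population composition iff both endpoint
conditions hold; equivalently, iff aβ < (1 − β)(1 − ρ) and ρ(1 + β) < 1 − aβ. -/
theorem control_dominates_iff_endpoints
    (a ρ β : ℝ) (ha : 0 < a) (hρ0 : 0 < ρ) (hρ1 : ρ ≤ 1) (hβ0 : 0 < β) (hβ1 : β < 1)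
    (fA fC : ℝ → ℝ)
    (hfA : ∀ y, fA y = ρ * (1 + β * y) / (a + 1))
    (hfC : ∀ y, fC y = ρ * (1 - β * (1 - y)) / (a + ρ * (1 - β * (1 - y)))) :
    ((∀ x ∈ Set.Icc (0 : ℝ) 1, fC x > fA x) ↔ (fC 0 > fA 0 ∧ fC 1 > fA 1)) ∧
    ((∀ x ∈ Set.Icc (0 : ℝ) 1, fC x > fA x) ↔
      (a * β < (1 - β) * (1 - ρ) ∧ ρ * (1 + β) < 1 - a * β)) := by
  have hd1 : (0:ℝ) < a + 1 := by linarith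
  have hdx : ∀ x : ℝ, 0 ≤ x → x ≤ 1 → 0 < a + ρ * (1 - β * (1 - x)) := by
    intro x hx0 hx1
    have : 0 < 1 - β * (1 - x) := by nlinarith
    nlinarith
  -- key reformulation
  have key : ∀ x : ℝ, 0 ≤ x → x ≤ 1 →
      (fC x > fA x ↔ 0 < ρ * (1 - β * (1 - x)) * (a + 1)
        - ρ * (1 + β * x) * (a + ρ * (1 - β * (1 - x)))) := by
    intro x hx0 hx1
    rw [hfA, hfC, gt_iff_lt, div_lt_div_iff₀ hd1 (hdx x hx0 hx1)]
    constructor <;> intro h <;> nlinarith [h]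
  have h0 : fC 0 > fA 0 ↔ a * β < (1 - β) * (1 - ρ) := by
    rw [key 0 le_rfl zero_le_one]
    constructor <;> intro h <;> nlinarith [mul_pos hρ0 hρ0]
  have h1 : fC 1 > fA 1 ↔ ρ * (1 + β) < 1 - a * β := by
    rw [key 1 zero_le_one le_rfl]
    constructor <;> intro h <;> nlinarith [mul_pos hρ0 hρ0]
  have main : (∀ x ∈ Set.Icc (0 : ℝ) 1, fC x > fA x) ↔ (fC 0 > fA 0 ∧ fC 1 > fA 1) := by
    constructor
    · intro h
      exact ⟨h 0 ⟨le_rfl, zero_le_one⟩, h 1 ⟨zero_le_one, le_rfl⟩⟩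
    · rintro ⟨e0, e1⟩ x ⟨hx0, hx1⟩
      rw [key x hx0 hx1]
      rw [key 0 le_rfl zero_le_one] at e0
      rw [key 1 zero_le_one le_rfl] at e1
      -- Q x = (1-x) Q 0 + x Q 1 + ρ²β² x (1-x)
      have hx1' : 0 ≤ 1 - x := by linarith
      have hprod : 0 ≤ x * (1 - x) := mul_nonneg hx0 hx1'
      rcases le_total (ρ * (1 - β * (1 - (0:ℝ))) * (a + 1)
          - ρ * (1 + β * 0) * (a + ρ * (1 - β * (1 - 0))))
          (ρ * (1 - β * (1 - (1:ℝ))) * (a + 1)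
          - ρ * (1 + β * 1) * (a + ρ * (1 - β * (1 - 1)))) with hc | hc
      · nlinarith [mul_nonneg hx0 (sub_nonneg.2 hc), mul_nonneg hprod (mul_pos (mul_pos hρ0 hρ0) (mul_pos hβ0 hβ0)).le]
      · nlinarith [mul_nonneg hx1' (sub_nonneg.2 hc), mul_nonneg hprod (mul_pos (mul_pos hρ0 hρ0) (mul_pos hβ0 hβ0)).le]
  exact ⟨main, main.trans (and_congr h0 h1)⟩
end

section
/- Coexistence: if f_C(0) > f_A(0) and f_C(1) < f_A(1) (each strategy has a fitness advantage when rare), then there exists exactly one x* ∈ (0,1) with f_C(x*) = f_A(x*); i.e. the replicator equation has a unique interior fixed point. -/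
noncomputable def coexQ (a ρ β x : ℝ) : ℝ :=
  (a + 1) * (ρ * (1 - β * (1 - x))) - ρ * (1 + β * x) * (a + ρ * (1 - β * (1 - x)))

lemma coexQ_cont (a ρ β : ℝ) : Continuous (coexQ a ρ β) := by
  unfold coexQ; fun_prop

lemma coexQ_quad (a ρ β x : ℝ) :
    coexQ a ρ β x = -(ρ * β) ^ 2 * x ^ 2 + (ρ * β * (1 - 2 * ρ + ρ * β)) * x
      + coexQ a ρ β 0 := by
  unfold coexQ; ring

/-- Coexistence: if f_C(0) > f_A(0) and f_C(1) < f_A(1), the replicator equation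
has a unique interior fixed point, i.e. a unique x* ∈ (0,1) with f_C(x*) = f_A(x*). -/
theorem coexistence_unique_interior_fixed_point
    (a ρ β : ℝ) (ha : 0 < a) (hρ0 : 0 < ρ) (hρ1 : ρ ≤ 1) (hβ0 : 0 < β) (hβ1 : β < 1)
    (fA fC : ℝ → ℝ)
    (hfA : ∀ y, fA y = ρ * (1 + β * y) / (a + 1))
    (hfC : ∀ y, fC y = ρ * (1 - β * (1 - y)) / (a + ρ * (1 - β * (1 - y))))
    (h0 : fC 0 > fA 0) (h1 : fC 1 < fA 1) :
    ∃! x, x ∈ Set.Ioo (0 : ℝ) 1 ∧ fC x = fA x := by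
  have ha1 : (0:ℝ) < a + 1 := by linarith
  -- denominator positivity on [0,1]
  have hd : ∀ x : ℝ, 0 ≤ x → 0 < a + ρ * (1 - β * (1 - x)) := by
    intro x hx
    have : 0 < 1 - β * (1 - x) := by nlinarith
    nlinarith
  -- equivalence with the quadratic
  have hiff : ∀ x : ℝ, 0 ≤ x → (fC x = fA x ↔ coexQ a ρ β x = 0) := by
    intro x hx
    rw [hfA, hfC, div_eq_div_iff (hd x hx).ne' ha1.ne']
    unfold coexQ
    constructor <;> intro h <;> linear_combination h
  -- sign at 0
  have hQ0 : 0 < coexQ a ρ β 0 := by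
    rw [hfA, hfC] at h0
    have h0' := (div_lt_div_iff₀ ha1 (hd 0 le_rfl)).1 h0
    unfold coexQ; nlinarith [h0']
  -- sign at 1
  have hQ1 : coexQ a ρ β 1 < 0 := by
    rw [hfA, hfC] at h1
    have h1' := (div_lt_div_iff₀ (hd 1 zero_le_one) ha1).1 h1
    unfold coexQ; nlinarith [h1']
  -- existence via IVT
  obtain ⟨x, hx, hQx⟩ :=
    intermediate_value_Ioo' (zero_le_one) ((coexQ_cont a ρ β).continuousOn)
      (Set.mem_Ioo.mpr ⟨hQ1, hQ0⟩)
  refine ⟨x, ⟨hx, (hiff x hx.1.le).2 hQx⟩, ?_⟩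
  rintro y ⟨hy, hfy⟩
  have hQy : coexQ a ρ β y = 0 := (hiff y hy.1.le).1 hfy
  -- uniqueness via Vieta
  rw [coexQ_quad] at hQx hQy
  have hfac : (y - x) * (-(ρ * β) ^ 2 * (y + x) + ρ * β * (1 - 2 * ρ + ρ * β)) = 0 := by
    linear_combination hQy - hQx
  rcases mul_eq_zero.1 hfac with h | h
  · linarith
  · exfalso
    have hC : coexQ a ρ β 0 = -(ρ * β) ^ 2 * (x * y) := by
      linear_combination hQx - x * h
    have hb : 0 < ρ * β := mul_pos hρ0 hβ0
    nlinarith [mul_pos hx.1 hy.1, sq_nonneg (ρ * β)]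
end

section
/- Bistability: if f_C(0) < f_A(0) and f_C(1) > f_A(1) (each strategy has a fitness disadvantage when rare), then there exists exactly one x* ∈ (0,1) with f_C(x*) = f_A(x*); i.e. the replicator equation has a unique interior fixed point. -/
/-- Bistability: if f_C(0) < f_A(0) and f_C(1) > f_A(1), the replicator equation
has a unique interior fixed point, i.e. a unique x* ∈ (0,1) with f_C(x*) = f_A(x*). -/
theorem bistability_unique_interior_fixed_point
    (a ρ β : ℝ) (ha : 0 < a) (hρ0 : 0 < ρ) (hρ1 : ρ ≤ 1) (hβ0 : 0 < β) (hβ1 : β < 1)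
    (fA fC : ℝ → ℝ)
    (hfA : ∀ y, fA y = ρ * (1 + β * y) / (a + 1))
    (hfC : ∀ y, fC y = ρ * (1 - β * (1 - y)) / (a + ρ * (1 - β * (1 - y))))
    (h0 : fC 0 < fA 0) (h1 : fC 1 > fA 1) :
    ∃! x, x ∈ Set.Ioo (0 : ℝ) 1 ∧ fC x = fA x := by
  set Q : ℝ → ℝ := fun x =>
    (1 + β * x) * (a + ρ * (1 - β * (1 - x))) - (1 - β * (1 - x)) * (a + 1) with hQdef
  have ha1 : (0:ℝ) < a + 1 := by linarith
  have hden : ∀ x ∈ Set.Icc (0:ℝ) 1, 0 < a + ρ * (1 - β * (1 - x)) := by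
    intro x hx
    have h1x : 1 - β * (1 - x) ≥ 1 - β := by nlinarith [hx.1, hx.2]
    nlinarith
  have key : ∀ x ∈ Set.Icc (0:ℝ) 1, (fC x = fA x ↔ Q x = 0) := by
    intro x hx
    rw [hfA, hfC, div_eq_div_iff (hden x hx).ne' ha1.ne']
    constructor
    · intro h
      have hz : ρ * Q x = 0 := by
        simp only [hQdef]
        linear_combination -h
      rcases mul_eq_zero.1 hz with h' | h'
      · exact absurd h' (ne_of_gt hρ0)
      · exact h'
    · intro h
      simp only [hQdef] at h
      linear_combination (-ρ) * h
  have hQ0 : 0 < Q 0 := by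
    rw [hfA, hfC, div_lt_div_iff₀ (hden 0 (by norm_num)) ha1] at h0
    by_contra h
    push_neg at h
    simp only [hQdef] at h
    nlinarith [h0, mul_nonneg hρ0.le (neg_nonneg.2 h)]
  have hQ1 : Q 1 < 0 := by
    rw [hfA, hfC, gt_iff_lt, div_lt_div_iff₀ ha1 (hden 1 (by norm_num))] at h1
    by_contra h
    push_neg at h
    simp only [hQdef] at h
    nlinarith [h1, mul_nonneg hρ0.le h]
  -- existence via IVT
  have hcont : ContinuousOn Q (Set.Icc 0 1) := by
    simp only [hQdef]; fun_prop
  have hiv := intermediate_value_Ioo' (le_of_lt one_pos) hcont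
  have h0mem : (0:ℝ) ∈ Set.Ioo (Q 1) (Q 0) := ⟨hQ1, hQ0⟩
  obtain ⟨x, hxmem, hxQ⟩ := hiv h0mem
  refine ⟨x, ⟨hxmem, (key x (Set.Ioo_subset_Icc_self hxmem)).2 hxQ⟩, ?_⟩
  rintro y ⟨hymem, hyeq⟩
  have hyQ : Q y = 0 := (key y (Set.Ioo_subset_Icc_self hymem)).1 hyeq
  by_contra hne
  have hsum : ρ * β ^ 2 * (y + x) + β * (2 * ρ - 1 - ρ * β) = 0 := by
    have hsub : Q y - Q x = (y - x) * (ρ * β ^ 2 * (y + x) + β * (2 * ρ - 1 - ρ * β)) := by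
      simp only [hQdef]; ring
    have hyx : y - x ≠ 0 := sub_ne_zero.2 hne
    have : (y - x) * (ρ * β ^ 2 * (y + x) + β * (2 * ρ - 1 - ρ * β)) = 0 := by
      rw [← hsub, hyQ, hxQ, sub_zero]
    exact (mul_eq_zero.1 this).resolve_left hyx
  have hQ1eq : Q 1 = ρ * β ^ 2 * (1 - y) * (1 - x) := by
    simp only [hQdef] at hyQ ⊢
    linear_combination hyQ + (1 - y) * hsum
  have hpos : 0 < ρ * β ^ 2 * (1 - y) * (1 - x) :=
    mul_pos (mul_pos (mul_pos hρ0 (pow_pos hβ0 2)) (by linarith [hymem.2])) (by linarith [hxmem.2])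
  linarith [hQ1eq ▸ hQ1]
end

section
/- The region of parameter space where control dominates shrinks as a grows: if a > 0, a′ with 0 < a′ ≤ a, and f_C^{(a)}(x) > f_A^{(a)}(x) for all x ∈ [0,1] (control dominates at diminishing-returns parameter a), then also f_C^{(a′)}(x) > f_A^{(a′)}(x) for all x ∈ [0,1], where the superscript indicates the value of the diminishing-returns parameter used in the fitness functions. -/
/-- The region of parameter space where control dominates shrinks as a grows:
if control dominates at diminishing-returns parameter a, then it also dominates
at any smaller parameter a′ with 0 < a′ ≤ a. -/
theorem control_dominance_monotone_in_a
    (ρ β : ℝ) (hρ0 : 0 < ρ) (hρ1 : ρ ≤ 1) (hβ0 : 0 < β) (hβ1 : β < 1)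
    (fA fC : ℝ → ℝ → ℝ)
    (hfA : ∀ a y, fA a y = ρ * (1 + β * y) / (a + 1))
    (hfC : ∀ a y, fC a y = ρ * (1 - β * (1 - y)) / (a + ρ * (1 - β * (1 - y))))
    (a a' : ℝ) (ha : 0 < a) (ha' : 0 < a') (haa' : a' ≤ a)
    (hdom : ∀ x ∈ Set.Icc (0 : ℝ) 1, fC a x > fA a x) :
    ∀ x ∈ Set.Icc (0 : ℝ) 1, fC a' x > fA a' x := by
  intro x hx
  obtain ⟨hx0, hx1⟩ := hx
  have hd := hdom x ⟨hx0, hx1⟩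
  rw [hfA, hfC] at hd ⊢
  have hg : 0 < ρ * (1 - β * (1 - x)) := by nlinarith [mul_nonneg hβ0.le hx0]
  have h1 : (0:ℝ) < a + 1 := by linarith
  have h2 : 0 < a + ρ * (1 - β * (1 - x)) := by linarith
  have h1' : (0:ℝ) < a' + 1 := by linarith
  have h2' : 0 < a' + ρ * (1 - β * (1 - x)) := by linarith
  rw [gt_iff_lt, div_lt_div_iff₀ h1 h2] at hd
  rw [gt_iff_lt, div_lt_div_iff₀ h1' h2']
  nlinarith [mul_pos hρ0 hβ0, mul_nonneg (mul_pos hρ0 hβ0).le (sub_nonneg.2 haa')]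
end

section
/- Control wins when the competitive advantage of automatic agents is sufficiently small: for every a > 0 and every ρ with 0 < ρ < 1, there exists β₀ ∈ (0,1) such that for all β with 0 < β < β₀ one has f_C(x) > f_A(x) for all x ∈ [0,1]. -/
/-- Control wins when the competitive advantage of automatic agents is small:
for every a > 0 and 0 < ρ < 1, there exists β₀ ∈ (0,1) such that for all
0 < β < β₀, f_C(x) > f_A(x) for all x ∈ [0,1]. -/
theorem control_wins_for_small_beta
    (a ρ : ℝ) (ha : 0 < a) (hρ0 : 0 < ρ) (hρ1 : ρ < 1)
    (fA fC : ℝ → ℝ → ℝ)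
    (hfA : ∀ β y, fA β y = ρ * (1 + β * y) / (a + 1))
    (hfC : ∀ β y, fC β y = ρ * (1 - β * (1 - y)) / (a + ρ * (1 - β * (1 - y)))) :
    ∃ β₀ ∈ Set.Ioo (0 : ℝ) 1, ∀ β, 0 < β → β < β₀ →
      ∀ x ∈ Set.Icc (0 : ℝ) 1, fC β x > fA β x := by
  refine ⟨min ((1 - ρ) / (1 + 2 * a)) (1 / 2), ⟨?_, ?_⟩, ?_⟩
  · exact lt_min (div_pos (by linarith) (by linarith)) (by norm_num)
  · exact lt_of_le_of_lt (min_le_right _ _) (by norm_num)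
  · intro β hβ0 hβ hx hx1
    obtain ⟨hx0, hx1'⟩ := hx1
    have hβa : β < (1 - ρ) / (1 + 2 * a) := lt_of_lt_of_le hβ (min_le_left _ _)
    have hβh : β < 1 / 2 := lt_of_lt_of_le hβ (min_le_right _ _)
    have hβa' : β * (1 + 2 * a) < 1 - ρ := by
      rw [div_eq_mul_inv] at hβa
      have h2a : (0:ℝ) < 1 + 2 * a := by linarith
      calc β * (1 + 2 * a) < (1 - ρ) * (1 + 2 * a)⁻¹ * (1 + 2 * a) := by
            exact mul_lt_mul_of_pos_right hβa h2a
        _ = 1 - ρ := by field_simp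
    rw [hfA, hfC]
    have hs : 0 < 1 - β * (1 - hx) := by nlinarith
    have hd1 : (0:ℝ) < a + 1 := by linarith
    have hd2 : 0 < a + ρ * (1 - β * (1 - hx)) := by positivity
    rw [gt_iff_lt, div_lt_div_iff₀ hd1 hd2]
    nlinarith [mul_pos hβ0 (mul_pos hρ0 hβ0), sq_nonneg hx, sq_nonneg (1 - hx),
      mul_nonneg (mul_nonneg hβ0.le hβ0.le) (mul_nonneg hρ0.le hx0),
      mul_nonneg hβ0.le hx0, mul_pos hρ0 hβ0, mul_nonneg (mul_pos hρ0 hβ0).le hx0,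
      mul_nonneg (mul_nonneg (mul_pos hρ0 hβ0).le hβ0.le) (sub_nonneg.2 hx1'),
      mul_nonneg hx0 (sub_nonneg.2 hx1')]
end

section
/- Global dominance of control: if f_C(y) > f_A(y) for all y ∈ (0,1), then every solution x : ℝ → ℝ of the replicator equation ẋ = F(x) with x(0) ∈ (0,1) satisfies x(t) → 1 as t → ∞; i.e. x = 1 (all controlled agents) is the global attractor on (0,1). -/
/-- Global dominance of control: if f_C > f_A on (0,1), then every solution of
the replicator equation starting in (0,1) tends to 1 as t → ∞. -/
theorem control_global_attractor
    (a ρ β : ℝ) (ha : 0 < a) (hρ0 : 0 < ρ) (hρ1 : ρ ≤ 1) (hβ0 : 0 < β) (hβ1 : β < 1)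
    (fA fC F : ℝ → ℝ)
    (hfA : ∀ y, fA y = ρ * (1 + β * y) / (a + 1))
    (hfC : ∀ y, fC y = ρ * (1 - β * (1 - y)) / (a + ρ * (1 - β * (1 - y))))
    (hF : ∀ y, F y = y * (1 - y) * (fC y - fA y))
    (hdom : ∀ y ∈ Set.Ioo (0 : ℝ) 1, fC y > fA y)
    (x : ℝ → ℝ) (hx : ∀ t, HasDerivAt x (F (x t)) t)
    (h0 : x 0 ∈ Set.Ioo (0 : ℝ) 1) :
    Filter.Tendsto x Filter.atTop (nhds 1) := by
  have hxd : Differentiable ℝ x := fun t => (hx t).differentiableAt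
  have hxc : Continuous x := hxd.continuous
  -- explicit formula for F
  have hFfun : F = fun y => y * (1 - y) *
      (ρ * (1 - β * (1 - y)) / (a + ρ * (1 - β * (1 - y))) - ρ * (1 + β * y) / (a + 1)) := by
    funext y; rw [hF, hfC, hfA]
  -- denominator positivity on [0,1]
  have hden : ∀ c ∈ Set.Icc (0:ℝ) 1, 0 < a + ρ * (1 - β * (1 - c)) := by
    intro c hc
    nlinarith [mul_pos hρ0 (sub_pos.mpr hβ1), mul_nonneg (mul_nonneg hρ0.le hβ0.le) hc.1]
  -- F is C¹ where the denominator doesn't vanish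
  have hcd : ∀ c : ℝ, a + ρ * (1 - β * (1 - c)) ≠ 0 → ContDiffAt ℝ 1 F c := by
    intro c hc
    rw [hFfun]
    have h1 : ContDiffAt ℝ 1 (fun y : ℝ => ρ * (1 - β * (1 - y))) c := by fun_prop
    have h2 : ContDiffAt ℝ 1 (fun y : ℝ => a + ρ * (1 - β * (1 - y))) c := by fun_prop
    have h3 : ContDiffAt ℝ 1 (fun y : ℝ => ρ * (1 + β * y) / (a + 1)) c :=
      (show ContDiffAt ℝ 1 (fun y : ℝ => ρ * (1 + β * y)) c by fun_prop).div_const (a + 1)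
    have h4 : ContDiffAt ℝ 1 (fun y : ℝ => y * (1 - y)) c := by fun_prop
    exact h4.mul ((h1.div h2 hc).sub h3)
  -- equilibria are "sticky": locally a solution touching them stays there
  have key : ∀ (c : ℝ), ContDiffAt ℝ 1 F c → F c = 0 → ∀ t₁ : ℝ, x t₁ = c →
      ∀ᶠ t in nhds t₁, x t = c := by
    intro c hcdc hFc t₁ ht₁
    obtain ⟨K, U, hU, hlip⟩ := hcdc.exists_lipschitzOnWith
    have hv : ∀ t : ℝ, LipschitzOnWith K (fun y => F y) ((fun _ : ℝ => U) t) := fun _ => hlip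
    have hUx : U ∈ nhds (x t₁) := ht₁ ▸ hU
    have hf : ∀ᶠ t in nhds t₁, HasDerivAt x (F (x t)) t ∧ x t ∈ U := by
      filter_upwards [(hxc.continuousAt (x := t₁)).eventually_mem hUx] with t ht
      exact ⟨hx t, ht⟩
    have hg : ∀ᶠ t in nhds t₁,
        HasDerivAt (fun _ : ℝ => c) (F ((fun _ : ℝ => c) t)) t ∧ (fun _ : ℝ => c) t ∈ U :=
      Filter.Eventually.of_forall fun t =>
        ⟨by simpa [hFc] using hasDerivAt_const t c, mem_of_mem_nhds hU⟩
    exact ODE_solution_unique_of_eventually (v := fun _ y => F y) (s := fun _ => U) (Filter.Eventually.of_forall hv) hf hg ht₁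
  -- hence the solution never equals such an equilibrium if it doesn't start there
  have hnever : ∀ c : ℝ, ContDiffAt ℝ 1 F c → F c = 0 → x 0 ≠ c → ∀ t, x t ≠ c := by
    intro c h1 h2 h3 t ht
    have hclopen : IsClopen {t | x t = c} := by
      constructor
      · exact isClosed_eq hxc continuous_const
      · rw [isOpen_iff_mem_nhds]
        intro t₁ ht₁
        exact key c h1 h2 t₁ ht₁
    have huniv : {t | x t = c} = Set.univ :=
      (isClopen_iff.mp hclopen).resolve_left (Set.nonempty_iff_ne_empty.mp ⟨t, ht⟩)
    exact h3 (Set.eq_univ_iff_forall.mp huniv 0)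
  have hF0 : F 0 = 0 := by rw [hF]; ring
  have hF1 : F 1 = 0 := by rw [hF]; ring
  have hn0 : ∀ t, x t ≠ 0 :=
    hnever 0 (hcd 0 (hden 0 (by norm_num)).ne') hF0 (ne_of_gt h0.1)
  have hn1 : ∀ t, x t ≠ 1 :=
    hnever 1 (hcd 1 (hden 1 (by norm_num)).ne') hF1 (ne_of_lt h0.2)
  -- invariance of (0,1)
  have hIoo : ∀ t, x t ∈ Set.Ioo (0:ℝ) 1 := by
    have hclopen : IsClopen {t | x t ∈ Set.Ioo (0:ℝ) 1} := by
      constructor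
      · rw [← isOpen_compl_iff]
        have hcompl : {t | x t ∈ Set.Ioo (0:ℝ) 1}ᶜ = {t | x t < 0} ∪ {t | 1 < x t} := by
          ext t
          simp only [Set.mem_compl_iff, Set.mem_setOf_eq, Set.mem_Ioo, not_and_or, not_lt,
            Set.mem_union]
          constructor
          · rintro (h | h)
            · exact Or.inl (lt_of_le_of_ne h (hn0 t))
            · exact Or.inr (lt_of_le_of_ne h (hn1 t).symm)
          · rintro (h | h)
            exacts [Or.inl h.le, Or.inr h.le]
        rw [hcompl]
        exact (isOpen_lt hxc continuous_const).union (isOpen_lt continuous_const hxc)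
      · exact isOpen_Ioo.preimage hxc
    have huniv : {t | x t ∈ Set.Ioo (0:ℝ) 1} = Set.univ :=
      (isClopen_iff.mp hclopen).resolve_left (Set.nonempty_iff_ne_empty.mp ⟨0, h0⟩)
    exact fun t => Set.eq_univ_iff_forall.mp huniv t
  -- F is positive on (0,1)
  have hFpos : ∀ y ∈ Set.Ioo (0:ℝ) 1, 0 < F y := by
    intro y hy
    rw [hF]
    exact mul_pos (mul_pos hy.1 (by linarith [hy.2])) (sub_pos.mpr (hdom y hy))
  -- x is strictly monotone
  have hmono : StrictMono x :=
    strictMono_of_deriv_pos fun t => by rw [(hx t).deriv]; exact hFpos _ (hIoo t)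
  have hbdd : BddAbove (Set.range x) := ⟨1, by rintro _ ⟨t, rfl⟩; exact (hIoo t).2.le⟩
  set L := ⨆ t, x t with hLdef
  have htend : Filter.Tendsto x Filter.atTop (nhds L) :=
    tendsto_atTop_ciSup hmono.monotone hbdd
  have hxleL : ∀ t, x t ≤ L := fun t => le_ciSup hbdd t
  have hL1 : L ≤ 1 := ciSup_le fun t => (hIoo t).2.le
  have hLeq : L = 1 := by
    by_contra hne
    have hL : L < 1 := lt_of_le_of_ne hL1 hne
    have hx0L : x 0 ≤ L := hxleL 0
    -- minimum of F on [x 0, L]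
    have hsub : Set.Icc (x 0) L ⊆ Set.Ioo (0:ℝ) 1 :=
      fun y hy => ⟨lt_of_lt_of_le h0.1 hy.1, lt_of_le_of_lt hy.2 hL⟩
    have hcontF : ContinuousOn F (Set.Icc (x 0) L) := by
      intro y hy
      have : y ∈ Set.Icc (0:ℝ) 1 := ⟨(hsub hy).1.le, (hsub hy).2.le⟩
      exact ((hcd y (hden y this).ne').continuousAt).continuousWithinAt
    obtain ⟨z, hzK, hz⟩ := isCompact_Icc.exists_isMinOn ⟨x 0, Set.left_mem_Icc.mpr hx0L⟩ hcontF
    have hδ : 0 < F z := hFpos z (hsub hzK)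
    have hxK : ∀ t : ℝ, 0 ≤ t → x t ∈ Set.Icc (x 0) L :=
      fun t ht => ⟨hmono.monotone ht, hxleL t⟩
    -- x grows at least linearly, contradiction with boundedness
    set g : ℝ → ℝ := fun t => x t - F z * t with hgdef
    have hg' : ∀ t, HasDerivAt g (F (x t) - F z) t := by
      intro t
      have h2 : HasDerivAt (fun s : ℝ => F z * s) (F z) t := by
        simpa using (hasDerivAt_id t).const_mul (F z)
      exact (hx t).sub h2
    have hgm : MonotoneOn g (Set.Ici 0) := by
      apply monotoneOn_of_deriv_nonneg (convex_Ici 0)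
        (fun t _ => ((hg' t).continuousAt).continuousWithinAt)
        (fun t _ => ((hg' t).differentiableAt).differentiableWithinAt)
      intro t ht
      rw [interior_Ici] at ht
      rw [(hg' t).deriv]
      exact sub_nonneg.mpr (isMinOn_iff.mp hz _ (hxK t ht.le))
    set T : ℝ := (L - x 0) / F z + 1 with hTdef
    have hT0 : (0:ℝ) ≤ T := by
      rw [hTdef]
      have h1 : 0 ≤ (L - x 0) / F z := div_nonneg (by linarith) hδ.le
      linarith
    have hgle : g 0 ≤ g T := hgm (Set.mem_Ici.mpr le_rfl) (Set.mem_Ici.mpr hT0) hT0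
    have hδ' : F z ≠ 0 := hδ.ne'
    have hFzT : F z * T = (L - x 0) + F z := by
      rw [hTdef]
      field_simp
    have hxTL : x T ≤ L := hxleL T
    simp only [hgdef] at hgle
    have : x 0 - F z * 0 ≤ x T - F z * T := hgle
    linarith
  rw [← hLeq]
  exact htend
end

section
/- Global dominance of automaticity: if f_A(y) > f_C(y) for all y ∈ (0,1), then every solution x : ℝ → ℝ of the replicator equation ẋ = F(x) with x(0) ∈ (0,1) satisfies x(t) → 0 as t → ∞; i.e. x = 0 (all automatic agents) is the global attractor on (0,1). -/
open Set Filter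

/-- Bounds on the payoff functions on `[0,1]`. -/
lemma replicator_aux_bounds (a ρ β y : ℝ) (ha : 0 < a) (hρ0 : 0 < ρ) (hρ1 : ρ ≤ 1)
    (hβ0 : 0 < β) (hβ1 : β < 1) (hy0 : 0 ≤ y) (hy1 : y ≤ 1) :
    0 ≤ ρ * (1 + β * y) / (a + 1) ∧ ρ * (1 + β * y) / (a + 1) ≤ 2 ∧
    0 ≤ ρ * (1 - β * (1 - y)) / (a + ρ * (1 - β * (1 - y))) ∧
    ρ * (1 - β * (1 - y)) / (a + ρ * (1 - β * (1 - y))) ≤ 1 := by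
  have hβy : 0 ≤ β * y := mul_nonneg hβ0.le hy0
  have hD : 0 < ρ * (1 - β * (1 - y)) := mul_pos hρ0 (by nlinarith)
  have ha1 : (0:ℝ) < a + 1 := by linarith
  have hden : 0 < a + ρ * (1 - β * (1 - y)) := by linarith
  refine ⟨div_nonneg (by nlinarith) ha1.le, ?_, div_nonneg hD.le hden.le, ?_⟩
  · rw [div_le_iff₀ ha1]
    nlinarith [mul_le_mul_of_nonneg_right hρ1 (show (0:ℝ) ≤ 1 + β * y by nlinarith)]
  · rw [div_le_one hden]; linarith

/-- Global dominance of automaticity: if f_A > f_C on (0,1), then every solution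
of the replicator equation starting in (0,1) tends to 0 as t → ∞. -/
theorem automatic_global_attractor
    (a ρ β : ℝ) (ha : 0 < a) (hρ0 : 0 < ρ) (hρ1 : ρ ≤ 1) (hβ0 : 0 < β) (hβ1 : β < 1)
    (fA fC F : ℝ → ℝ)
    (hfA : ∀ y, fA y = ρ * (1 + β * y) / (a + 1))
    (hfC : ∀ y, fC y = ρ * (1 - β * (1 - y)) / (a + ρ * (1 - β * (1 - y))))
    (hF : ∀ y, F y = y * (1 - y) * (fC y - fA y))
    (hdom : ∀ y ∈ Set.Ioo (0 : ℝ) 1, fA y > fC y)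
    (x : ℝ → ℝ) (hx : ∀ t, HasDerivAt x (F (x t)) t)
    (h0 : x 0 ∈ Set.Ioo (0 : ℝ) 1) :
    Filter.Tendsto x Filter.atTop (nhds 0) := by
  obtain ⟨hx0, hx01⟩ := h0
  have hcont : Continuous x := by
    rw [continuous_iff_continuousAt]; exact fun t => (hx t).continuousAt
  -- bounds on fA, fC on [0,1]
  have hbA : ∀ y : ℝ, 0 ≤ y → y ≤ 1 → 0 ≤ fA y ∧ fA y ≤ 2 ∧ 0 ≤ fC y ∧ fC y ≤ 1 := by
    intro y hy0 hy1
    rw [hfA, hfC]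
    exact replicator_aux_bounds a ρ β y ha hρ0 hρ1 hβ0 hβ1 hy0 hy1
  -- F < 0 on (0,1)
  have hFneg : ∀ y : ℝ, 0 < y → y < 1 → F y < 0 := by
    intro y h1 h2
    rw [hF]
    exact mul_neg_of_pos_of_neg (mul_pos h1 (by linarith)) (sub_neg.2 (hdom y ⟨h1, h2⟩))
  -- exp derivative helper
  have hexp : ∀ t : ℝ, HasDerivAt (fun s => Real.exp (3 * s)) (3 * Real.exp (3 * t)) t := by
    intro t
    have h1 : HasDerivAt (fun s : ℝ => 3 * s) 3 t := by
      simpa using (hasDerivAt_id t).const_mul 3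
    simpa [mul_comm] using h1.exp
  -- IVT helper: if x leaves (0,1) at time s ≥ 0, it hits {0,1} before
  have hivt : ∀ s : ℝ, 0 ≤ s → ¬(0 < x s ∧ x s < 1) →
      ∃ u, 0 ≤ u ∧ u ≤ s ∧ (x u = 0 ∨ x u = 1) := by
    intro s hs hns
    push_neg at hns
    rcases le_or_gt (x s) 0 with hle | hpos
    · have h0mem : (0:ℝ) ∈ Icc (x s) (x 0) := ⟨hle, hx0.le⟩
      obtain ⟨u, hu, hxu⟩ := intermediate_value_Icc' hs hcont.continuousOn h0mem
      exact ⟨u, hu.1, hu.2, Or.inl hxu⟩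
    · have h1le : 1 ≤ x s := hns hpos
      have h1mem : (1:ℝ) ∈ Icc (x 0) (x s) := ⟨hx01.le, h1le⟩
      obtain ⟨u, hu, hxu⟩ := intermediate_value_Icc hs hcont.continuousOn h1mem
      exact ⟨u, hu.1, hu.2, Or.inr hxu⟩
  -- Invariance of (0,1) for t ≥ 0
  have hinv : ∀ t : ℝ, 0 ≤ t → 0 < x t ∧ x t < 1 := by
    by_contra hcon
    push_neg at hcon
    obtain ⟨t, ht0, htn⟩ := hcon
    obtain ⟨u, hu0, _, hxu⟩ := hivt t ht0 (fun hc => absurd (htn hc.1) (not_le.2 hc.2))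
    set A : Set ℝ := Ici 0 ∩ x ⁻¹' {0, 1} with hA
    have hAne : A.Nonempty := ⟨u, hu0, by simpa using hxu⟩
    have hAcl : IsClosed A :=
      isClosed_Ici.inter ((isClosed_singleton.union isClosed_singleton).preimage hcont)
    have hAbdd : BddBelow A := ⟨0, fun v hv => hv.1⟩
    set t1 := sInf A with ht1
    have ht1A : t1 ∈ A := hAcl.csInf_mem hAne hAbdd
    have ht1nonneg : 0 ≤ t1 := ht1A.1
    have ht1val : x t1 = 0 ∨ x t1 = 1 := by simpa using ht1A.2
    have ht1pos : 0 < t1 := by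
      rcases ht1nonneg.lt_or_eq with h | h
      · exact h
      · exfalso; rcases ht1val with h' | h' <;> rw [← h] at h' <;> linarith
    -- before t1, x stays in (0,1)
    have hmem : ∀ s, 0 ≤ s → s < t1 → 0 < x s ∧ x s < 1 := by
      intro s hs0 hst
      by_contra hns
      obtain ⟨u', hu'0, hu's, hxu'⟩ := hivt s hs0 hns
      have : t1 ≤ u' := csInf_le hAbdd ⟨hu'0, by simpa using hxu'⟩
      linarith
    -- on [0,t1], x ∈ [0,1]
    have hcls : ∀ s ∈ Icc (0:ℝ) t1, 0 ≤ x s ∧ x s ≤ 1 := by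
      intro s hs
      rcases hs.2.lt_or_eq with h | h
      · have := hmem s hs.1 h; exact ⟨this.1.le, this.2.le⟩
      · rw [h]; rcases ht1val with h' | h' <;> rw [h'] <;> norm_num
    rcases ht1val with hzero | hone
    · -- barrier at 0 : h s = x s * exp (3 s) is monotone on [0,t1]
      set h : ℝ → ℝ := fun s => x s * Real.exp (3 * s) with hh
      have hd : ∀ s : ℝ, HasDerivAt h
          (F (x s) * Real.exp (3 * s) + x s * (3 * Real.exp (3 * s))) s :=
        fun s => (hx s).mul (hexp s)
      have hmono : MonotoneOn h (Icc 0 t1) := by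
        apply monotoneOn_of_deriv_nonneg (convex_Icc 0 t1)
          (fun s _ => (hd s).continuousAt.continuousWithinAt)
          (fun s _ => (hd s).differentiableAt.differentiableWithinAt)
        intro s hs
        rw [interior_Icc] at hs
        rw [(hd s).deriv]
        obtain ⟨hy0, hy1⟩ := hcls s ⟨hs.1.le, hs.2.le⟩
        obtain ⟨hA0, hA2, hC0, hC1⟩ := hbA (x s) hy0 hy1
        have hE : 0 < Real.exp (3 * s) := Real.exp_pos _
        have hFb : F (x s) + 3 * x s ≥ 0 := by
          rw [hF]
          nlinarith [mul_nonneg (sub_nonneg.2 hy1) (show (0:ℝ) ≤ fC (x s) - fA (x s) + 2 by linarith)]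
        nlinarith
      have := hmono (left_mem_Icc.2 ht1nonneg) (right_mem_Icc.2 ht1nonneg) ht1nonneg
      rw [hh] at this
      simp only [hzero, zero_mul, mul_zero, Real.exp_zero, mul_one] at this
      linarith
    · -- barrier at 1 : h s = (1 - x s) * exp (3 s) is monotone on [0,t1]
      set h : ℝ → ℝ := fun s => (1 - x s) * Real.exp (3 * s) with hh
      have hd : ∀ s : ℝ, HasDerivAt h
          ((0 - F (x s)) * Real.exp (3 * s) + (1 - x s) * (3 * Real.exp (3 * s))) s :=
        fun s => (((hasDerivAt_const s (1:ℝ)).sub (hx s)).mul (hexp s))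
      have hmono : MonotoneOn h (Icc 0 t1) := by
        apply monotoneOn_of_deriv_nonneg (convex_Icc 0 t1)
          (fun s _ => (hd s).continuousAt.continuousWithinAt)
          (fun s _ => (hd s).differentiableAt.differentiableWithinAt)
        intro s hs
        rw [interior_Icc] at hs
        rw [(hd s).deriv]
        obtain ⟨hy0, hy1⟩ := hcls s ⟨hs.1.le, hs.2.le⟩
        obtain ⟨hA0, hA2, hC0, hC1⟩ := hbA (x s) hy0 hy1
        have hE : 0 < Real.exp (3 * s) := Real.exp_pos _
        have hFb : 3 * (1 - x s) - F (x s) ≥ 0 := by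
          rw [hF]
          nlinarith [mul_nonneg hy0 (show (0:ℝ) ≤ 1 - (fC (x s) - fA (x s)) by linarith),
            mul_nonneg (sub_nonneg.2 hy1) (show (0:ℝ) ≤ 3 - x s * (fC (x s) - fA (x s)) by
              nlinarith [mul_nonneg hy0 (show (0:ℝ) ≤ 1 - (fC (x s) - fA (x s)) by linarith)])]
        nlinarith
      have := hmono (left_mem_Icc.2 ht1nonneg) (right_mem_Icc.2 ht1nonneg) ht1nonneg
      rw [hh] at this
      simp only [hone, sub_self, zero_mul, mul_zero, Real.exp_zero, mul_one] at this
      linarith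
  -- x strictly decreasing on [0,∞)
  have hanti : StrictAntiOn x (Ici 0) := by
    apply strictAntiOn_of_deriv_neg (convex_Ici 0) hcont.continuousOn
    intro t ht
    rw [interior_Ici] at ht
    rw [(hx t).deriv]
    obtain ⟨h1, h2⟩ := hinv t (le_of_lt ht)
    exact hFneg _ h1 h2
  -- monotone limit
  set y : ℝ → ℝ := fun t => x (max t 0) with hy
  have hyanti : Antitone y := by
    intro s t hst
    have hmax : max s 0 ≤ max t 0 := max_le_max hst le_rfl
    rcases hmax.lt_or_eq with h | h
    · exact (hanti (le_max_right s 0) (le_max_right t 0) h).le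
    · rw [hy]; simp only [h]; exact le_rfl
  have hbdd : BddBelow (range y) := by
    refine ⟨0, fun v hv => ?_⟩
    obtain ⟨t, ht⟩ := hv
    rw [← ht]
    exact (hinv _ (le_max_right t 0)).1.le
  set L := ⨅ t, y t with hL
  have htendy : Tendsto y atTop (nhds L) := tendsto_atTop_ciInf hyanti hbdd
  have hxeqy : x =ᶠ[atTop] y := by
    filter_upwards [eventually_ge_atTop (0:ℝ)] with t ht
    rw [hy]; simp [max_eq_left ht]
  have htendx : Tendsto x atTop (nhds L) := htendy.congr' hxeqy.symm
  have hLle : ∀ t : ℝ, 0 ≤ t → L ≤ x t := by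
    intro t ht
    have := ciInf_le hbdd t
    rwa [show y t = x t by rw [hy]; simp [max_eq_left ht]] at this
  have hL0 : 0 ≤ L := le_ciInf fun t => (hinv _ (le_max_right t 0)).1.le
  -- L = 0
  have hLzero : L = 0 := by
    by_contra hne
    have hLpos : 0 < L := hL0.lt_of_ne (Ne.symm hne)
    have hLx0 : L ≤ x 0 := hLle 0 le_rfl
    -- F is continuous on [L, x 0]
    have hFc : ContinuousOn F (Icc L (x 0)) := by
      have heq : EqOn F (fun z => z * (1 - z) *
          (ρ * (1 - β * (1 - z)) / (a + ρ * (1 - β * (1 - z))) - ρ * (1 + β * z) / (a + 1)))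
          (Icc L (x 0)) := by
        intro z _; rw [hF, hfC, hfA]
      refine ContinuousOn.congr ?_ heq
      apply ContinuousOn.mul (by fun_prop)
      apply ContinuousOn.sub _ (by fun_prop)
      apply ContinuousOn.div (by fun_prop) (by fun_prop)
      intro z hz
      have hz0 : 0 ≤ z := le_trans hL0 hz.1
      have hz1 : z ≤ x 0 := hz.2
      have hβz : 0 ≤ β * z := mul_nonneg hβ0.le hz0
      nlinarith [mul_pos hρ0 (show (0:ℝ) < 1 - β * (1 - z) by nlinarith)]
    obtain ⟨w, hwmem, hwmax⟩ := isCompact_Icc.exists_isMaxOn ⟨L, left_mem_Icc.2 hLx0⟩ hFc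
    have hw0 : 0 < w := lt_of_lt_of_le hLpos hwmem.1
    have hw1 : w < 1 := lt_of_le_of_lt hwmem.2 hx01
    set c := -F w with hc
    have hcpos : 0 < c := by rw [hc]; linarith [hFneg w hw0 hw1]
    -- g t = x t + c * t is antitone on [0,∞)
    set g : ℝ → ℝ := fun t => x t + c * t with hg
    have hgd : ∀ t : ℝ, HasDerivAt g (F (x t) + c) t := by
      intro t
      have h1 : HasDerivAt (fun s : ℝ => c * s) c t := by
        simpa using (hasDerivAt_id t).const_mul c
      exact (hx t).add h1
    have hganti : AntitoneOn g (Ici 0) := by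
      apply antitoneOn_of_deriv_nonpos (convex_Ici 0)
        (fun t _ => (hgd t).continuousAt.continuousWithinAt)
        (fun t _ => (hgd t).differentiableAt.differentiableWithinAt)
      intro t ht
      rw [interior_Ici] at ht
      rw [(hgd t).deriv]
      have hxt : x t ∈ Icc L (x 0) :=
        ⟨hLle t (le_of_lt ht), (hanti (self_mem_Ici) (mem_Ici.2 (le_of_lt ht)) ht).le⟩
      have := isMaxOn_iff.mp hwmax (x t) hxt
      rw [hc]; linarith
    set T := x 0 / c with hT
    have hT0 : 0 ≤ T := div_nonneg hx0.le hcpos.le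
    have := hganti (self_mem_Ici) hT0 hT0
    rw [hg] at this
    simp only [mul_zero, add_zero] at this
    have hcT : c * T = x 0 := by rw [hT]; field_simp
    have hxT : x T ≤ 0 := by linarith
    linarith [hLle T hT0]
  rw [hLzero] at htendx
  exact htendx
end

section
/- Stable coexistence: suppose x* ∈ (0,1) satisfies f_C(y) > f_A(y) for all y ∈ (0, x*) and f_C(y) < f_A(y) for all y ∈ (x*, 1). Then every solution x : ℝ → ℝ of the replicator equation ẋ = F(x) with x(0) ∈ (0,1) satisfies x(t) → x* as t → ∞; i.e. the interior fixed point x* is the global attractor on (0,1), giving coexistence of automatic and controlled agents. -/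
/-- If `F < 0` on `(p,q)` and `x 0 ≤ p`, a solution of `x' = F (x)` stays below `q`
for all `t ≥ 0`. -/
lemma no_upcross_aux (F : ℝ → ℝ) (x : ℝ → ℝ) (hx : ∀ t, HasDerivAt x (F (x t)) t)
    (p q : ℝ) (hpq : p < q) (hFneg : ∀ y ∈ Set.Ioo p q, F y < 0)
    (h0 : x 0 ≤ p) : ∀ t ≥ 0, x t < q := by
  have hcont : Continuous x := by
    have : Differentiable ℝ x := fun t => (hx t).differentiableAt
    exact this.continuous
  intro t3 ht3
  by_contra hge
  push_neg at hge
  set S : Set ℝ := Set.Icc 0 t3 ∩ {t | q ≤ x t} with hS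
  have hScomp : IsCompact S := isCompact_Icc.inter_right (isClosed_le continuous_const hcont)
  have hSne : S.Nonempty := ⟨t3, ⟨ht3, le_refl _⟩, hge⟩
  set T := sInf S with hT
  have hTS : T ∈ S := hScomp.sInf_mem hSne
  obtain ⟨⟨hT0, hTt3⟩, hTq⟩ := hTS
  simp only [Set.mem_setOf_eq] at hTq
  have hbefore : ∀ t, 0 ≤ t → t < T → x t < q := by
    intro t h1 h2
    by_contra h
    push_neg at h
    have ht : t ∈ S := ⟨⟨h1, h2.le.trans hTt3⟩, h⟩
    exact absurd (csInf_le hScomp.bddBelow ht) (not_le.2 h2)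
  -- T2 : last time before T with x ≤ p
  set S2 : Set ℝ := Set.Icc 0 T ∩ {t | x t ≤ p} with hS2
  have hS2comp : IsCompact S2 := isCompact_Icc.inter_right (isClosed_le hcont continuous_const)
  have hS2ne : S2.Nonempty := ⟨0, ⟨le_refl _, hT0⟩, h0⟩
  set T2 := sSup S2 with hT2
  have hT2S : T2 ∈ S2 := hS2comp.sSup_mem hS2ne
  obtain ⟨⟨hT20, hT2T⟩, hT2p⟩ := hT2S
  simp only [Set.mem_setOf_eq] at hT2p
  have hT2ltT : T2 < T := by
    rcases lt_or_eq_of_le hT2T with h | h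
    · exact h
    · exfalso; rw [h] at hT2p; linarith
  have hmid : ∀ t ∈ Set.Ioo T2 T, x t ∈ Set.Ioo p q := by
    intro t ht
    constructor
    · by_contra h
      push_neg at h
      have : t ∈ S2 := ⟨⟨hT20.trans ht.1.le, ht.2.le⟩, h⟩
      exact absurd (le_csSup hS2comp.bddAbove this) (not_le.2 ht.1)
    · exact hbefore t (hT20.trans ht.1.le) ht.2
  have hanti : StrictAntiOn x (Set.Icc T2 T) := by
    apply strictAntiOn_of_deriv_neg (convex_Icc T2 T) hcont.continuousOn
    intro t ht
    rw [interior_Icc] at ht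
    rw [(hx t).deriv]
    exact hFneg _ (hmid t ht)
  have := hanti ⟨le_refl _, hT2ltT.le⟩ ⟨hT2ltT.le, le_refl _⟩ hT2ltT
  linarith

/-- Mirror of `no_upcross_aux`. -/
lemma no_downcross_aux (F : ℝ → ℝ) (x : ℝ → ℝ) (hx : ∀ t, HasDerivAt x (F (x t)) t)
    (p q : ℝ) (hqp : q < p) (hFpos : ∀ y ∈ Set.Ioo q p, 0 < F y)
    (h0 : p ≤ x 0) : ∀ t ≥ 0, q < x t := by
  have hx' : ∀ t, HasDerivAt (fun s => -x s) ((fun z => -F (-z)) ((fun s => -x s) t)) t := by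
    intro t
    simpa using (hx t).fun_neg
  have key := no_upcross_aux (fun z => -F (-z)) (fun s => -x s) hx' (-p) (-q) (by linarith)
    (fun y hy => by
      have h1 : -y ∈ Set.Ioo q p := ⟨by linarith [hy.2], by linarith [hy.1]⟩
      have := hFpos _ h1
      simpa using this) (by simpa using h0)
  intro t ht
  have := key t ht
  simp only [neg_lt_neg_iff] at this
  linarith


/-- Stable coexistence: if f_C > f_A on (0, x*) and f_C < f_A on (x*, 1) for
some x* ∈ (0,1), then every solution of the replicator equation starting in
(0,1) tends to the interior fixed point x* as t → ∞. -/
theorem coexistence_global_attractor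
    (a ρ β : ℝ) (ha : 0 < a) (hρ0 : 0 < ρ) (hρ1 : ρ ≤ 1) (hβ0 : 0 < β) (hβ1 : β < 1)
    (fA fC F : ℝ → ℝ)
    (hfA : ∀ y, fA y = ρ * (1 + β * y) / (a + 1))
    (hfC : ∀ y, fC y = ρ * (1 - β * (1 - y)) / (a + ρ * (1 - β * (1 - y))))
    (hF : ∀ y, F y = y * (1 - y) * (fC y - fA y))
    (xstar : ℝ) (hxstar : xstar ∈ Set.Ioo (0 : ℝ) 1)
    (hleft : ∀ y ∈ Set.Ioo (0 : ℝ) xstar, fC y > fA y)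
    (hright : ∀ y ∈ Set.Ioo xstar (1 : ℝ), fC y < fA y)
    (x : ℝ → ℝ) (hx : ∀ t, HasDerivAt x (F (x t)) t)
    (h0 : x 0 ∈ Set.Ioo (0 : ℝ) 1) :
    Filter.Tendsto x Filter.atTop (nhds xstar) := by

  obtain ⟨hxs0, hxs1⟩ := hxstar
  obtain ⟨h00, h01⟩ := h0
  have hcont : Continuous x := by
    have : Differentiable ℝ x := fun t => (hx t).differentiableAt
    exact this.continuous
  set m : ℝ := min (x 0) xstar with hm
  set M : ℝ := max (x 0) xstar with hM
  have hm0 : 0 < m := lt_min h00 hxs0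
  have hM1 : M < 1 := max_lt h01 hxs1
  have hmxs : m ≤ xstar := min_le_right _ _
  have hxsM : xstar ≤ M := le_max_right _ _
  have hmM : m ≤ M := hmxs.trans hxsM
  -- sign facts
  have hFpos : ∀ y ∈ Set.Ioo (0 : ℝ) xstar, 0 < F y := by
    intro y hy
    rw [hF]
    have h1 : 0 < 1 - y := by have := hy.2; linarith
    have h2 : 0 < fC y - fA y := sub_pos.2 (hleft y hy)
    exact mul_pos (mul_pos hy.1 h1) h2
  have hFneg : ∀ y ∈ Set.Ioo xstar (1 : ℝ), F y < 0 := by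
    intro y hy
    rw [hF]
    have h1 : 0 < y := hxs0.trans hy.1
    have h2 : 0 < 1 - y := by have := hy.2; linarith
    have h3 : fC y - fA y < 0 := sub_neg.2 (hright y hy)
    exact mul_neg_of_pos_of_neg (by positivity) h3
  -- trajectory bounds
  have hub : ∀ t ≥ 0, x t ≤ M := by
    intro t ht
    by_contra h
    push_neg at h
    set M' : ℝ := (M + min (x t) 1) / 2 with hM'
    have hMm : M < min (x t) 1 := lt_min h hM1
    have h1 : M < M' := by simp only [hM']; linarith
    have h2 : M' < min (x t) 1 := by simp only [hM']; linarith
    have hM'1 : M' < 1 := h2.trans_le (min_le_right _ _)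
    have hM'xt : M' < x t := h2.trans_le (min_le_left _ _)
    have := no_upcross_aux F x hx M M' h1
      (fun y hy => hFneg y ⟨hxsM.trans_lt hy.1, hy.2.trans hM'1⟩)
      (le_max_left _ _) t ht
    linarith
  have hlb : ∀ t ≥ 0, m ≤ x t := by
    intro t ht
    by_contra h
    push_neg at h
    set m' : ℝ := (max (x t) 0 + m) / 2 with hm'
    have hmm : max (x t) 0 < m := max_lt h hm0
    have h1 : m' < m := by simp only [hm']; linarith
    have h2 : max (x t) 0 < m' := by simp only [hm']; linarith
    have hm'0 : 0 < m' := (le_max_right _ _).trans_lt h2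
    have hm'xt : x t < m' := (le_max_left _ _).trans_lt h2
    have := no_downcross_aux F x hx m m' h1
      (fun y hy => hFpos y ⟨hm'0.trans hy.1, hy.2.trans_le hmxs⟩)
      (min_le_left _ _) t ht
    linarith
  have hmem : ∀ t ≥ 0, x t ∈ Set.Icc m M := fun t ht => ⟨hlb t ht, hub t ht⟩
  -- continuity of F on [m, M]
  have hdenom : ∀ y ∈ Set.Icc m M, a + ρ * (1 - β * (1 - y)) ≠ 0 := by
    intro y hy
    have h1 : 0 < y := hm0.trans_le hy.1
    have h3 : 0 < 1 - β * (1 - y) := by nlinarith [mul_pos hβ0 h1]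
    have h4 : 0 < ρ * (1 - β * (1 - y)) := mul_pos hρ0 h3
    exact (show (0:ℝ) < a + ρ * (1 - β * (1 - y)) by linarith).ne'
  have hFcont : ContinuousOn F (Set.Icc m M) := by
    have hg : ContinuousOn (fun y : ℝ =>
        y * (1 - y) * (ρ * (1 - β * (1 - y)) / (a + ρ * (1 - β * (1 - y)))
          - ρ * (1 + β * y) / (a + 1))) (Set.Icc m M) := by
      apply ContinuousOn.mul
      · exact (continuous_id.mul (continuous_const.sub continuous_id)).continuousOn
      · apply ContinuousOn.sub
        · exact ContinuousOn.div (by fun_prop) (by fun_prop) hdenom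
        · exact ((continuous_const.mul (continuous_const.add
            (continuous_const.mul continuous_id))).div_const _).continuousOn
    exact hg.congr (fun y _ => by rw [hF, hfA, hfC])
  -- Lyapunov function
  set W : ℝ → ℝ := fun y => 2 * (y - xstar) * F y with hW
  have hWcont : ContinuousOn W (Set.Icc m M) :=
    ((continuous_const.mul (continuous_id.sub continuous_const)).continuousOn).mul hFcont
  have hWneg : ∀ y ∈ Set.Icc m M, y ≠ xstar → W y < 0 := by
    intro y hy hne
    rcases lt_or_gt_of_ne hne with h | h
    · have hFy := hFpos y ⟨hm0.trans_le hy.1, h⟩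
      have : 2 * (y - xstar) < 0 := by linarith
      exact mul_neg_of_neg_of_pos this hFy
    · have hFy := hFneg y ⟨h, hy.2.trans_lt hM1⟩
      have : 0 < 2 * (y - xstar) := by linarith
      exact mul_neg_of_pos_of_neg this hFy
  have hWnonpos : ∀ y ∈ Set.Icc m M, W y ≤ 0 := by
    intro y hy
    rcases eq_or_ne y xstar with h | h
    · simp [hW, h]
    · exact (hWneg y hy h).le
  set V : ℝ → ℝ := fun t => (x t - xstar) ^ 2 with hV
  have hVderiv : ∀ t, HasDerivAt V (W (x t)) t := by
    intro t
    have h1 := ((hx t).sub_const xstar).fun_pow 2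
    simpa [hW, hV, pow_one] using h1
  have hVcont : Continuous V := by
    have : Differentiable ℝ V := fun t => (hVderiv t).differentiableAt
    exact this.continuous
  have hVanti : AntitoneOn V (Set.Ici 0) := by
    apply antitoneOn_of_deriv_nonpos (convex_Ici 0) hVcont.continuousOn
    · intro t _
      exact (hVderiv t).differentiableAt.differentiableWithinAt
    · intro t ht
      rw [interior_Ici] at ht
      rw [(hVderiv t).deriv]
      exact hWnonpos _ (hmem t ht.le)
  -- key step: for every ε > 0 there is a time T with |x T - xstar| < ε
  have hclose : ∀ ε > (0 : ℝ), ∃ T ≥ (0 : ℝ), |x T - xstar| < ε := by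
    intro ε hε
    by_contra h
    push_neg at h
    set K : Set ℝ := Set.Icc m M ∩ {y | ε ≤ |y - xstar|} with hK
    have hKcomp : IsCompact K := isCompact_Icc.inter_right
      (isClosed_le continuous_const (continuous_id.sub continuous_const).abs)
    have hKsub : K ⊆ Set.Icc m M := Set.inter_subset_left
    have hKne : K.Nonempty := ⟨x 0, hmem 0 le_rfl, h 0 le_rfl⟩
    obtain ⟨y0, hy0K, hy0max⟩ := hKcomp.exists_isMaxOn hKne (hWcont.mono hKsub)
    have hy0ne : y0 ≠ xstar := by
      intro heq
      have := hy0K.2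
      rw [heq] at this
      simp at this
      linarith
    set δ : ℝ := -W y0 with hδ
    have hδpos : 0 < δ := by
      have := hWneg y0 (hKsub hy0K) hy0ne
      linarith
    -- u = V + δ t is antitone on [0, ∞)
    set u : ℝ → ℝ := fun t => V t + δ * t with hu
    have huderiv : ∀ t, HasDerivAt u (W (x t) + δ) t := by
      intro t
      have h2 : HasDerivAt (fun s : ℝ => δ * s) δ t := by
        simpa using (hasDerivAt_id t).const_mul δ
      exact (hVderiv t).add h2
    have huanti : AntitoneOn u (Set.Ici 0) := by
      apply antitoneOn_of_deriv_nonpos (convex_Ici 0)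
      · exact (Differentiable.continuous (fun t => (huderiv t).differentiableAt)).continuousOn
      · intro t _
        exact (huderiv t).differentiableAt.differentiableWithinAt
      · intro t ht
        rw [interior_Ici] at ht
        rw [(huderiv t).deriv]
        have hxtK : x t ∈ K := ⟨hmem t ht.le, h t ht.le⟩
        have h3 : W (x t) ≤ W y0 := hy0max hxtK
        rw [hδ]
        linarith
    have hV0 : 0 ≤ V 0 := sq_nonneg _
    set t1 : ℝ := V 0 / δ + 1 with ht1
    have hq : 0 ≤ V 0 / δ := div_nonneg hV0 hδpos.le
    have ht1pos : 0 < t1 := by rw [ht1]; linarith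
    have hu2 := huanti (Set.self_mem_Ici) (Set.mem_Ici.2 ht1pos.le) ht1pos.le
    simp only [hu] at hu2
    have hV1 : 0 ≤ V t1 := sq_nonneg _
    have h5 : δ * t1 ≤ V 0 := by linarith
    rw [ht1] at h5
    have hδne : δ ≠ 0 := hδpos.ne'
    have h2 : δ * (V 0 / δ + 1) = V 0 + δ := by field_simp
    rw [h2] at h5
    linarith
  -- conclude
  rw [Metric.tendsto_atTop]
  intro ε hε
  obtain ⟨T, hT0, hTε⟩ := hclose ε hε
  refine ⟨T, fun n hn => ?_⟩
  have hVn : V n ≤ V T := hVanti (Set.mem_Ici.2 hT0) (Set.mem_Ici.2 (hT0.trans hn)) hn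
  have hVTdef : V T = (x T - xstar) ^ 2 := rfl
  have hVndef : V n = (x n - xstar) ^ 2 := rfl
  have hVT : V T < ε ^ 2 := by
    rw [hVTdef]
    nlinarith [abs_nonneg (x T - xstar), sq_abs (x T - xstar)]
  have hVn2 : (x n - xstar) ^ 2 < ε ^ 2 := by rw [← hVndef]; exact lt_of_le_of_lt hVn hVT
  rw [Real.dist_eq]
  nlinarith [abs_nonneg (x n - xstar), sq_abs (x n - xstar)]
end

section
/- Bistability basins: suppose x* ∈ (0,1) satisfies f_C(y) < f_A(y) for all y ∈ (0, x*) and f_C(y) > f_A(y) for all y ∈ (x*, 1). Then every solution x : ℝ → ℝ of the replicator equation ẋ = F(x) with x(0) ∈ (0, x*) satisfies x(t) → 0 as t → ∞, and every solution with x(0) ∈ (x*, 1) satisfies x(t) → 1 as t → ∞; i.e. the endpoints x = 0 and x = 1 are both attracting, with the unstable interior fixed point x* separating their basins. -/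
open Set Filter

lemma core_down (b : ℝ) (G : ℝ → ℝ)
    (hGc : ContinuousOn G (Set.Icc 0 b))
    (hGneg : ∀ y ∈ Set.Ioo 0 b, G y < 0)
    (C : ℝ) (hC : ∀ y ∈ Set.Icc 0 b, -(C * y) ≤ G y)
    (x : ℝ → ℝ) (hx : ∀ t, HasDerivAt x (G (x t)) t)
    (hx0 : x 0 ∈ Set.Ioo 0 b) :
    Filter.Tendsto x Filter.atTop (nhds 0) := by
  have hxc : Continuous x := continuous_iff_continuousAt.mpr fun t => (hx t).continuousAt
  -- invariance
  have hinv : ∀ t, 0 ≤ t → x t ∈ Set.Ioo 0 b := by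
    by_contra hS
    push_neg at hS
    obtain ⟨t', ht'0, ht'⟩ := hS
    set S : Set ℝ := {t | 0 ≤ t} ∩ x ⁻¹' (Set.Ioo 0 b)ᶜ with hSdef
    have hSne : S.Nonempty := ⟨t', ht'0, ht'⟩
    have hSc : IsClosed S :=
      (isClosed_le continuous_const continuous_id).inter
        (isOpen_Ioo.preimage hxc).isClosed_compl
    have hSbd : BddBelow S := ⟨0, fun t ht => ht.1⟩
    set t₀ := sInf S with ht₀def
    have ht₀S : t₀ ∈ S := hSc.csInf_mem hSne hSbd
    have ht₀pos : 0 < t₀ := by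
      rcases lt_or_eq_of_le (show (0:ℝ) ≤ t₀ from ht₀S.1) with h | h
      · exact h
      · exact absurd hx0 (by rw [← h] at ht₀S; exact ht₀S.2)
    have hmem : ∀ s, 0 ≤ s → s < t₀ → x s ∈ Set.Ioo 0 b := by
      intro s hs hst
      by_contra h
      exact absurd (csInf_le hSbd ⟨hs, h⟩) (not_le.mpr hst)
    have hanti : AntitoneOn x (Set.Icc 0 t₀) := by
      apply antitoneOn_of_deriv_nonpos (convex_Icc 0 t₀) hxc.continuousOn
        (fun t _ => (hx t).differentiableAt.differentiableWithinAt)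
      intro t ht
      rw [interior_Icc] at ht
      rw [(hx t).deriv]
      exact (hGneg _ (hmem t ht.1.le ht.2)).le
    have hxt₀b : x t₀ ≤ x 0 :=
      hanti (Set.left_mem_Icc.mpr ht₀pos.le) ⟨ht₀pos.le, le_rfl⟩ ht₀pos.le
    have hxt₀ : x t₀ ≤ 0 := by
      rcases not_and_or.mp (fun h : 0 < x t₀ ∧ x t₀ < b => ht₀S.2 h) with h | h
      · linarith [not_lt.mp h]
      · exact absurd (lt_of_le_of_lt hxt₀b hx0.2) h
    set h : ℝ → ℝ := fun t => x t * Real.exp (C * t) with hhdef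
    have hh : ∀ t, HasDerivAt h (G (x t) * Real.exp (C * t) + x t * (Real.exp (C * t) * (C * 1))) t :=
      fun t => (hx t).mul (((hasDerivAt_id t).const_mul C).exp)
    have hmono : MonotoneOn h (Set.Icc 0 t₀) := by
      apply monotoneOn_of_deriv_nonneg (convex_Icc 0 t₀) (by fun_prop)
        (fun t _ => (hh t).differentiableAt.differentiableWithinAt)
      intro t ht
      rw [interior_Icc] at ht
      rw [(hh t).deriv]
      have hxt : x t ∈ Set.Ioo 0 b := hmem t ht.1.le ht.2
      have h1 := hC (x t) ⟨hxt.1.le, hxt.2.le⟩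
      have h2 := Real.exp_pos (C * t)
      nlinarith
    have h1 : h 0 ≤ h t₀ :=
      hmono (Set.left_mem_Icc.mpr ht₀pos.le) ⟨ht₀pos.le, le_rfl⟩ ht₀pos.le
    have h2 : h 0 = x 0 := by simp [hhdef]
    have h3 : h t₀ ≤ 0 :=
      mul_nonpos_of_nonpos_of_nonneg hxt₀ (Real.exp_pos _).le
    linarith [hx0.1]
  -- antitone on [0, ∞)
  have hantiI : AntitoneOn x (Set.Ici 0) := by
    apply antitoneOn_of_deriv_nonpos (convex_Ici 0) hxc.continuousOn
      (fun t _ => (hx t).differentiableAt.differentiableWithinAt)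
    intro t ht
    rw [interior_Ici] at ht
    rw [(hx t).deriv]
    exact (hGneg _ (hinv t ht.le)).le
  set y : ℝ → ℝ := fun t => x (max t 0) with hydef
  have hymono : Antitone y := fun s t hst =>
    hantiI (Set.mem_Ici.mpr (le_max_right s 0)) (Set.mem_Ici.mpr (le_max_right t 0))
      (max_le_max hst le_rfl)
  have hbdd : BddBelow (Set.range y) :=
    ⟨0, fun v ⟨t, ht⟩ => ht ▸ (hinv _ (le_max_right t 0)).1.le⟩
  set L := ⨅ t, y t with hLdef
  have hLten : Tendsto y atTop (nhds L) := tendsto_atTop_ciInf hymono hbdd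
  have hxy : x =ᶠ[atTop] y := by
    filter_upwards [eventually_ge_atTop (0:ℝ)] with t ht
    simp [hydef, max_eq_left ht]
  have htend : Tendsto x atTop (nhds L) := hLten.congr' hxy.symm
  have hL0 : 0 ≤ L := le_ciInf fun t => (hinv _ (le_max_right t 0)).1.le
  have hLle : ∀ t, 0 ≤ t → L ≤ x t := by
    intro t ht
    have := ciInf_le hbdd t
    rwa [show y t = x t by simp [hydef, max_eq_left ht]] at this
  have hLx0 : L ≤ x 0 := hLle 0 le_rfl
  rcases eq_or_lt_of_le hL0 with h | hLpos
  · rwa [← h] at htend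
  exfalso
  have hLb : L < b := lt_of_le_of_lt hLx0 hx0.2
  have hGL : G L < 0 := hGneg L ⟨hLpos, hLb⟩
  set m := G L / 2 with hmdef
  have hm : m < 0 := by simp [hmdef]; linarith
  have hcont : ContinuousAt G L :=
    hGc.continuousAt (Icc_mem_nhds hLpos hLb)
  have hev : ∀ᶠ z in nhds L, G z < m := hcont.eventually_lt_const (by linarith)
  obtain ⟨t₁, ht₁⟩ := (eventually_atTop.mp ((htend.eventually hev).and (eventually_ge_atTop 0)))
  set u : ℝ → ℝ := fun t => x t - m * t with hudef
  have hu : ∀ t, HasDerivAt u (G (x t) - m * 1) t :=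
    fun t => (hx t).sub ((hasDerivAt_id t).const_mul m)
  have huanti : AntitoneOn u (Set.Ici t₁) := by
    apply antitoneOn_of_deriv_nonpos (convex_Ici t₁) (by fun_prop)
      (fun t _ => (hu t).differentiableAt.differentiableWithinAt)
    intro t ht
    rw [interior_Ici] at ht
    rw [(hu t).deriv]
    have := (ht₁ t ht.le).1
    linarith
  set T := t₁ + (x t₁ + 1) / (-m) with hTdef
  have hxt₁ : 0 < x t₁ := (hinv t₁ (ht₁ t₁ le_rfl).2).1
  have hT : t₁ ≤ T := by
    have h0 : 0 ≤ (x t₁ + 1) / (-m) := div_nonneg (by linarith) (by linarith)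
    rw [hTdef]; linarith
  have h1 : u T ≤ u t₁ := huanti (Set.mem_Ici.mpr le_rfl) (Set.mem_Ici.mpr hT) hT
  have h2 : x T ≤ x t₁ + m * (T - t₁) := by
    simp only [hudef] at h1; linarith
  have h3 : m * (T - t₁) = -(x t₁ + 1) := by
    rw [hTdef]
    have hm' : m ≠ 0 := hm.ne
    have hGL' : G L ≠ 0 := hGL.ne
    field_simp [hm', hGL']
    ring
  have h4 : 0 < x T := (hinv T (le_trans (ht₁ t₁ le_rfl).2 hT)).1
  linarith
/-- Bistability basins: if f_C < f_A on (0, x*) and f_C > f_A on (x*, 1) for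
some x* ∈ (0,1), then solutions of the replicator equation starting in (0, x*)
tend to 0 and solutions starting in (x*, 1) tend to 1 as t → ∞. -/
theorem bistability_basins
    (a ρ β : ℝ) (ha : 0 < a) (hρ0 : 0 < ρ) (hρ1 : ρ ≤ 1) (hβ0 : 0 < β) (hβ1 : β < 1)
    (fA fC F : ℝ → ℝ)
    (hfA : ∀ y, fA y = ρ * (1 + β * y) / (a + 1))
    (hfC : ∀ y, fC y = ρ * (1 - β * (1 - y)) / (a + ρ * (1 - β * (1 - y))))
    (hF : ∀ y, F y = y * (1 - y) * (fC y - fA y))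
    (xstar : ℝ) (hxstar : xstar ∈ Set.Ioo (0 : ℝ) 1)
    (hleft : ∀ y ∈ Set.Ioo (0 : ℝ) xstar, fC y < fA y)
    (hright : ∀ y ∈ Set.Ioo xstar (1 : ℝ), fC y > fA y) :
    (∀ x : ℝ → ℝ, (∀ t, HasDerivAt x (F (x t)) t) → x 0 ∈ Set.Ioo (0 : ℝ) xstar →
      Filter.Tendsto x Filter.atTop (nhds 0)) ∧
    (∀ x : ℝ → ℝ, (∀ t, HasDerivAt x (F (x t)) t) → x 0 ∈ Set.Ioo xstar (1 : ℝ) →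
      Filter.Tendsto x Filter.atTop (nhds 1)) := by
  obtain ⟨hxs0, hxs1⟩ := hxstar
  -- basic bounds on fA, fC on [0,1]
  have hkey : ∀ y ∈ Set.Icc (0:ℝ) 1, 0 < 1 - β * (1 - y) := by
    intro y hy
    nlinarith [hy.1, hy.2, mul_nonneg hβ0.le hy.1]
  have hden : ∀ y ∈ Set.Icc (0:ℝ) 1, 0 < a + ρ * (1 - β * (1 - y)) := by
    intro y hy
    have := mul_pos hρ0 (hkey y hy)
    linarith
  have hfC0 : ∀ y ∈ Set.Icc (0:ℝ) 1, 0 ≤ fC y := by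
    intro y hy
    rw [hfC]
    exact div_nonneg (mul_nonneg hρ0.le (hkey y hy).le) (hden y hy).le
  have hfC1 : ∀ y ∈ Set.Icc (0:ℝ) 1, fC y ≤ 1 := by
    intro y hy
    rw [hfC, div_le_one (hden y hy)]
    linarith
  have hfA0 : ∀ y ∈ Set.Icc (0:ℝ) 1, 0 ≤ fA y := by
    intro y hy
    rw [hfA]
    apply div_nonneg _ (by linarith : (0:ℝ) ≤ a + 1)
    have := mul_nonneg hβ0.le hy.1
    nlinarith
  have hfA2 : ∀ y ∈ Set.Icc (0:ℝ) 1, fA y ≤ 2 := by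
    intro y hy
    rw [hfA, div_le_iff₀ (by linarith : (0:ℝ) < a + 1)]
    have h1 : β * y ≤ β * 1 := mul_le_mul_of_nonneg_left hy.2 hβ0.le
    have h2 : (0:ℝ) ≤ β * y := mul_nonneg hβ0.le hy.1
    have h3 : 1 + β * y ≤ 2 := by linarith
    have h4 : ρ * (1 + β * y) ≤ 1 * (1 + β * y) :=
      mul_le_mul_of_nonneg_right hρ1 (by linarith)
    nlinarith
  -- two-sided linear bounds on F on [0,1]
  have hFlow : ∀ y ∈ Set.Icc (0:ℝ) 1, -(3 * y) ≤ F y := by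
    intro y hy
    rw [hF]
    have h1 := hfC0 y hy
    have h2 := hfC1 y hy
    have h3 := hfA0 y hy
    have h4 := hfA2 y hy
    obtain ⟨hy1, hy2⟩ := hy
    nlinarith [mul_nonneg hy1 (by linarith : (0:ℝ) ≤ 1 - y),
      mul_nonneg (mul_nonneg hy1 (by linarith : (0:ℝ) ≤ 1 - y)) (by linarith : (0:ℝ) ≤ fC y - fA y + 2)]
  have hFhigh : ∀ y ∈ Set.Icc (0:ℝ) 1, F y ≤ 3 * (1 - y) := by
    intro y hy
    rw [hF]
    have h1 := hfC0 y hy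
    have h2 := hfC1 y hy
    have h3 := hfA0 y hy
    have h4 := hfA2 y hy
    obtain ⟨hy1, hy2⟩ := hy
    nlinarith [mul_nonneg hy1 (by linarith : (0:ℝ) ≤ 1 - y),
      mul_nonneg (mul_nonneg hy1 (by linarith : (0:ℝ) ≤ 1 - y)) (by linarith : (0:ℝ) ≤ 1 - (fC y - fA y))]
  -- continuity of F on [0,1]
  have hfAc : Continuous fA := by
    have : fA = fun y => ρ * (1 + β * y) / (a + 1) := funext hfA
    rw [this]
    exact (continuous_const.mul (continuous_const.add (continuous_const.mul continuous_id))).div_const _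
  have hfCc : ContinuousOn fC (Set.Icc 0 1) := by
    have h1 : ContinuousOn (fun y => ρ * (1 - β * (1 - y)) / (a + ρ * (1 - β * (1 - y)))) (Set.Icc 0 1) := by
      apply ContinuousOn.div (by fun_prop) (by fun_prop)
      exact fun y hy => (hden y hy).ne'
    exact h1.congr fun y hy => hfC y
  have hFc : ContinuousOn F (Set.Icc 0 1) := by
    have h1 : ContinuousOn (fun y => y * (1 - y) * (fC y - fA y)) (Set.Icc 0 1) :=
      (continuousOn_id.mul (continuousOn_const.sub continuousOn_id)).mul
        (hfCc.sub hfAc.continuousOn)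
    exact h1.congr fun y hy => hF y
  constructor
  · -- left basin
    intro x hx hx0
    apply core_down xstar F
      (hFc.mono (Set.Icc_subset_Icc le_rfl hxs1.le))
      (fun y hy => by
        rw [hF]
        have h1 : (0:ℝ) < 1 - y := by linarith [hy.2]
        exact mul_neg_of_pos_of_neg (mul_pos hy.1 h1) (by linarith [hleft y hy]))
      3
      (fun y hy => hFlow y ⟨hy.1, by linarith [hy.2]⟩)
      x hx hx0
  · -- right basin
    intro x hx hx0
    set G : ℝ → ℝ := fun y => -F (1 - y) with hGdef
    set z : ℝ → ℝ := fun t => 1 - x t with hzdef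
    have hz : ∀ t, HasDerivAt z (G (z t)) t := by
      intro t
      have h1 : HasDerivAt z (-(F (x t))) t := (hx t).const_sub 1
      have h2 : G (z t) = -(F (x t)) := by simp [hGdef, hzdef]
      rwa [h2]
    have hGc : ContinuousOn G (Set.Icc 0 (1 - xstar)) := by
      apply ContinuousOn.neg
      apply hFc.comp (continuous_const.sub continuous_id).continuousOn
      intro y hy
      simp only [id_eq, Set.mem_Icc, Pi.sub_apply] at *
      exact ⟨by linarith [hy.2, hxs0], by linarith [hy.1]⟩
    have hGneg : ∀ y ∈ Set.Ioo (0:ℝ) (1 - xstar), G y < 0 := by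
      intro y hy
      have hw : (1 - y) ∈ Set.Ioo xstar 1 := ⟨by linarith [hy.2], by linarith [hy.1]⟩
      have : 0 < F (1 - y) := by
        rw [hF]
        have h1 : (0:ℝ) < 1 - y := by linarith [hw.1, hxs0]
        have h2 : (0:ℝ) < 1 - (1 - y) := by linarith [hy.1]
        exact mul_pos (mul_pos h1 h2) (by linarith [hright _ hw])
      simp [hGdef]
      linarith
    have hGbound : ∀ y ∈ Set.Icc (0:ℝ) (1 - xstar), -(3 * y) ≤ G y := by
      intro y hy
      have hw : (1 - y) ∈ Set.Icc (0:ℝ) 1 := ⟨by linarith [hy.2, hxs0], by linarith [hy.1]⟩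
      have := hFhigh (1 - y) hw
      simp only [hGdef]
      linarith
    have hz0 : z 0 ∈ Set.Ioo 0 (1 - xstar) := by
      simp only [hzdef]
      exact ⟨by linarith [hx0.2], by linarith [hx0.1]⟩
    have hzt := core_down (1 - xstar) G hGc hGneg 3 hGbound z hz hz0
    have h1 : Filter.Tendsto (fun t => 1 - z t) Filter.atTop (nhds (1 - 0)) :=
      Filter.Tendsto.const_sub 1 hzt
    have h2 : x = fun t => 1 - z t := by funext t; simp [hzdef]
    rw [h2]
    simpa using h1
end

section
/- Local stability of the all-automatic state: if f_A(0) > f_C(0), then there exists δ > 0 such that every solution x : ℝ → ℝ of the replicator equation ẋ = F(x) with x(0) ∈ (0, δ) satisfies x(t) → 0 as t → ∞. -/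
open Real Set Filter

/-- Local stability of the all-automatic state: if f_A(0) > f_C(0), then there
exists δ > 0 such that every solution of the replicator equation starting in
(0, δ) tends to 0 as t → ∞. -/
theorem all_automatic_locally_stable
    (a ρ β : ℝ) (ha : 0 < a) (hρ0 : 0 < ρ) (hρ1 : ρ ≤ 1) (hβ0 : 0 < β) (hβ1 : β < 1)
    (fA fC F : ℝ → ℝ)
    (hfA : ∀ y, fA y = ρ * (1 + β * y) / (a + 1))
    (hfC : ∀ y, fC y = ρ * (1 - β * (1 - y)) / (a + ρ * (1 - β * (1 - y))))
    (hF : ∀ y, F y = y * (1 - y) * (fC y - fA y))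
    (h : fA 0 > fC 0) :
    ∃ δ > (0 : ℝ), ∀ x : ℝ → ℝ, (∀ t, HasDerivAt x (F (x t)) t) →
      x 0 ∈ Set.Ioo (0 : ℝ) δ → Filter.Tendsto x Filter.atTop (nhds 0) := by
  set m : ℝ := (fA 0 - fC 0) / 2 with hm
  have hm0 : 0 < m := by rw [hm]; linarith
  -- bounds on fA, fC for y ≥ 0
  have hfA_nonneg : ∀ y : ℝ, 0 ≤ y → 0 ≤ fA y := by
    intro y hy; rw [hfA]
    have h1 : 0 ≤ β * y := mul_nonneg hβ0.le hy
    apply div_nonneg (mul_nonneg hρ0.le (by linarith)) (by linarith)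
  have hfC_nonneg : ∀ y : ℝ, 0 ≤ y → 0 ≤ fC y := by
    intro y hy; rw [hfC]
    have h1 : 0 ≤ β * y := mul_nonneg hβ0.le hy
    have h2 : 0 ≤ 1 - β * (1 - y) := by nlinarith
    have h3 : 0 ≤ ρ * (1 - β * (1 - y)) := mul_nonneg hρ0.le h2
    apply div_nonneg h3 (by linarith)
  set K : ℝ := ρ * (1 + β) / (a + 1) with hKdef
  have hK : 0 < K := by
    apply div_pos (by nlinarith) (by linarith)
  have hfA_le : ∀ y ∈ Icc (0:ℝ) 1, fA y ≤ K := by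
    intro y hy; rw [hfA, hKdef]
    have h1 : β * y ≤ β := by nlinarith [hy.1, hy.2]
    have h2 : ρ * (1 + β * y) ≤ ρ * (1 + β) := by nlinarith
    exact div_le_div_of_nonneg_right h2 (by linarith) |>.trans_eq rfl
  -- continuity of g := fC - fA at 0
  have hgc : ContinuousAt (fun y => fC y - fA y) 0 := by
    have h1 : (fun y => fC y - fA y)
        = fun y => ρ * (1 - β * (1 - y)) / (a + ρ * (1 - β * (1 - y)))
            - ρ * (1 + β * y) / (a + 1) := by
      funext y; rw [hfA y, hfC y]
    rw [h1]
    apply ContinuousAt.sub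
    · apply ContinuousAt.div (by fun_prop) (by fun_prop)
      have : 0 < a + ρ * (1 - β * (1 - (0:ℝ))) := by nlinarith
      exact ne_of_gt this
    · fun_prop
  have hev : ∀ᶠ y in nhds (0:ℝ), fC y - fA y < -m := by
    apply hgc.eventually_lt continuousAt_const
    rw [hm]; linarith
  obtain ⟨δ₀, hδ₀, hball⟩ := Metric.eventually_nhds_iff.mp hev
  set δ : ℝ := min δ₀ 1 / 2 with hδdef
  have hδpos : 0 < δ := by positivity
  have hδhalf : δ ≤ 1 / 2 := by
    rw [hδdef]; have := min_le_right δ₀ 1; linarith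
  have hδlt : δ < δ₀ := by
    rw [hδdef]; have := min_le_left δ₀ 1; linarith [min_le_left δ₀ 1]
  have hgneg : ∀ y ∈ Icc (0:ℝ) δ, fC y - fA y ≤ -m := by
    intro y hy
    apply le_of_lt
    apply hball
    rw [Real.dist_eq, sub_zero, abs_of_nonneg hy.1]
    exact lt_of_le_of_lt hy.2 hδlt
  have hglb : ∀ y ∈ Icc (0:ℝ) 1, -K ≤ fC y - fA y := by
    intro y hy
    have h1 := hfC_nonneg y hy.1
    have h2 := hfA_le y hy
    linarith
  set c : ℝ := m * (1 - δ) with hcdef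
  have hc : 0 < c := by rw [hcdef]; nlinarith
  -- F inequalities
  have hFlow : ∀ y ∈ Icc (0:ℝ) δ, -(K * y) ≤ F y := by
    intro y hy
    have hy1 : y ∈ Icc (0:ℝ) 1 := ⟨hy.1, by linarith [hy.2]⟩
    have h1 := hglb y hy1
    rw [hF]
    nlinarith [mul_nonneg (mul_nonneg hy1.1 (by linarith [hy1.2] : (0:ℝ) ≤ 1 - y))
        (by linarith : (0:ℝ) ≤ fC y - fA y + K), mul_nonneg hK.le (sq_nonneg y)]
  have hFdecay : ∀ y ∈ Icc (0:ℝ) δ, F y ≤ -(c * y) := by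
    intro y hy
    have h1 := hgneg y hy
    rw [hF, hcdef]
    nlinarith [mul_nonneg (mul_nonneg hy.1 (by nlinarith [hy.2] : (0:ℝ) ≤ 1 - y))
        (by linarith : (0:ℝ) ≤ -m - (fC y - fA y)),
      mul_nonneg (mul_nonneg hm0.le hy.1) (by linarith [hy.2] : (0:ℝ) ≤ δ - y)]
  refine ⟨δ, hδpos, ?_⟩
  intro x hx hx0
  have hxc : Continuous x := continuous_iff_continuousAt.2 fun t => (hx t).continuousAt
  have hxd : Differentiable ℝ x := fun t => (hx t).differentiableAt
  have hexp : ∀ b t : ℝ, HasDerivAt (fun s => Real.exp (b * s)) (b * Real.exp (b * t)) t := by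
    intro b t
    have h1 : HasDerivAt (fun s : ℝ => b * s) b t := by
      simpa using (hasDerivAt_id t).const_mul b
    have := (Real.hasDerivAt_exp (b * t)).comp t h1
    exact this.congr_deriv (mul_comm _ _)
  have humul : ∀ (b : ℝ) (t : ℝ),
      HasDerivAt (fun s => x s * Real.exp (b * s))
        ((F (x t) + b * x t) * Real.exp (b * t)) t := by
    intro b t
    have := (hx t).mul (hexp b t)
    exact this.congr_deriv (by ring)
  -- invariance: x stays in Ioo 0 δ for t ≥ 0
  have key : ∀ t : ℝ, 0 ≤ t → x t ∈ Ioo (0:ℝ) δ := by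
    by_contra hcon
    push_neg at hcon
    obtain ⟨t', ht'0, ht'⟩ := hcon
    set B : Set ℝ := Ici 0 ∩ x ⁻¹' (Ioo (0:ℝ) δ)ᶜ with hBdef
    have hBne : B.Nonempty := ⟨t', ht'0, ht'⟩
    have hBc : IsClosed B := IsClosed.inter isClosed_Ici (isOpen_Ioo.isClosed_compl.preimage hxc)
    have hBb : BddBelow B := ⟨0, fun t ht => ht.1⟩
    set t₁ := sInf B with ht₁def
    have ht₁B : t₁ ∈ B := hBc.csInf_mem hBne hBb
    have ht₁0 : 0 < t₁ := by
      rcases lt_or_eq_of_le (mem_Ici.mp ht₁B.1) with h' | h'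
      · exact h'
      · exact absurd (h' ▸ hx0) ht₁B.2
    have hIco : ∀ s ∈ Ico (0:ℝ) t₁, x s ∈ Ioo (0:ℝ) δ := by
      intro s hs
      by_contra hsn
      exact absurd (csInf_le hBb ⟨hs.1, hsn⟩) (not_le.2 hs.2)
    have hIcc : ∀ s ∈ Icc (0:ℝ) t₁, x s ∈ Icc (0:ℝ) δ := by
      have hclosed : IsClosed (x ⁻¹' Icc (0:ℝ) δ) := isClosed_Icc.preimage hxc
      have hsub : Ico (0:ℝ) t₁ ⊆ x ⁻¹' Icc (0:ℝ) δ := by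
        intro s hs
        exact Ioo_subset_Icc_self (hIco s hs)
      have : Icc (0:ℝ) t₁ ⊆ x ⁻¹' Icc (0:ℝ) δ := by
        calc Icc (0:ℝ) t₁ = closure (Ico (0:ℝ) t₁) := (closure_Ico (ne_of_lt ht₁0)).symm
          _ ⊆ closure (x ⁻¹' Icc (0:ℝ) δ) := closure_mono hsub
          _ = x ⁻¹' Icc (0:ℝ) δ := hclosed.closure_eq
      exact fun s hs => this hs
    -- x is antitone on [0, t₁] since F ≤ 0 there
    have hanti : AntitoneOn x (Icc 0 t₁) := by
      apply antitoneOn_of_deriv_nonpos (convex_Icc _ _) hxc.continuousOn hxd.differentiableOn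
      intro s hs
      rw [interior_Icc] at hs
      rw [(hx s).deriv]
      have hxs := hIcc s ⟨hs.1.le, hs.2.le⟩
      have h1 := hFdecay (x s) hxs
      nlinarith [mul_nonneg hc.le hxs.1]
    have hupper : x t₁ < δ :=
      lt_of_le_of_lt (hanti ⟨le_refl 0, ht₁0.le⟩ ⟨ht₁0.le, le_refl t₁⟩ ht₁0.le) hx0.2
    -- x t₁ > 0 via exponential lower bound
    have hmono : MonotoneOn (fun t => x t * Real.exp (K * t)) (Icc 0 t₁) := by
      apply monotoneOn_of_deriv_nonneg (convex_Icc _ _)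
        (hxc.mul (by fun_prop)).continuousOn
        ((hxd.mul (by fun_prop)).differentiableOn)
      intro s hs
      rw [interior_Icc] at hs
      rw [show deriv (x * fun t => Real.exp (K * t)) s = _ from (humul K s).deriv]
      have hxs := hIcc s ⟨hs.1.le, hs.2.le⟩
      have h1 := hFlow (x s) hxs
      have h2 : 0 ≤ F (x s) + K * x s := by linarith
      exact mul_nonneg h2 (Real.exp_pos _).le
    have hlow : 0 < x t₁ := by
      have h1 := hmono ⟨le_refl 0, ht₁0.le⟩ ⟨ht₁0.le, le_refl t₁⟩ ht₁0.le
      simp only [mul_zero, Real.exp_zero, mul_one] at h1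
      by_contra h2
      push_neg at h2
      nlinarith [Real.exp_pos (K * t₁), hx0.1]
    exact ht₁B.2 ⟨hlow, hupper⟩
  -- exponential decay
  have hanti2 : AntitoneOn (fun t => x t * Real.exp (c * t)) (Ici 0) := by
    apply antitoneOn_of_deriv_nonpos (convex_Ici _)
      (hxc.mul (by fun_prop)).continuousOn
      ((hxd.mul (by fun_prop)).differentiableOn)
    intro s hs
    rw [interior_Ici] at hs
    rw [show deriv (x * fun t => Real.exp (c * t)) s = _ from (humul c s).deriv]
    have hxs := key s hs.le
    have h1 := hFdecay (x s) ⟨hxs.1.le, hxs.2.le⟩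
    have h2 : F (x s) + c * x s ≤ 0 := by linarith
    exact mul_nonpos_of_nonpos_of_nonneg h2 (Real.exp_pos _).le
  have hbound : ∀ t : ℝ, 0 ≤ t → x t ≤ x 0 * Real.exp (-(c * t)) := by
    intro t ht
    have h1 := hanti2 self_mem_Ici ht ht
    simp only [mul_zero, Real.exp_zero, mul_one] at h1
    rw [Real.exp_neg]
    rw [mul_comm (x 0), ← div_eq_inv_mul, le_div_iff₀ (Real.exp_pos _)]
    exact h1
  have hlim : Tendsto (fun t => x 0 * Real.exp (-(c * t))) atTop (nhds 0) := by
    have h1 : Tendsto (fun t : ℝ => c * t) atTop atTop :=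
      Tendsto.const_mul_atTop hc tendsto_id
    have h2 : Tendsto (fun t : ℝ => -(c * t)) atTop atBot :=
      tendsto_neg_atTop_atBot.comp h1
    have h3 := (Real.tendsto_exp_atBot.comp h2).const_mul (x 0)
    simpa using h3
  apply tendsto_of_tendsto_of_tendsto_of_le_of_le' tendsto_const_nhds hlim
  · filter_upwards [eventually_ge_atTop (0:ℝ)] with t ht using (key t ht).1.le
  · filter_upwards [eventually_ge_atTop (0:ℝ)] with t ht using hbound t ht
end

section
/- Local stability of the all-controlled state: if f_C(1) > f_A(1), then there exists δ > 0 such that every solution x : ℝ → ℝ of the replicator equation ẋ = F(x) with x(0) ∈ (1 − δ, 1) satisfies x(t) → 1 as t → ∞. -/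
open Set Filter

set_option maxHeartbeats 1600000 in
/-- Local stability of the all-controlled state: if f_C(1) > f_A(1), then there
exists δ > 0 such that every solution of the replicator equation starting in
(1 − δ, 1) tends to 1 as t → ∞. -/
theorem all_controlled_locally_stable
    (a ρ β : ℝ) (ha : 0 < a) (hρ0 : 0 < ρ) (hρ1 : ρ ≤ 1) (hβ0 : 0 < β) (hβ1 : β < 1)
    (fA fC F : ℝ → ℝ)
    (hfA : ∀ y, fA y = ρ * (1 + β * y) / (a + 1))
    (hfC : ∀ y, fC y = ρ * (1 - β * (1 - y)) / (a + ρ * (1 - β * (1 - y))))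
    (hF : ∀ y, F y = y * (1 - y) * (fC y - fA y))
    (h : fC 1 > fA 1) :
    ∃ δ > (0 : ℝ), ∀ x : ℝ → ℝ, (∀ t, HasDerivAt x (F (x t)) t) →
      x 0 ∈ Set.Ioo (1 - δ) 1 → Filter.Tendsto x Filter.atTop (nhds 1) := by
  set c : ℝ := fC 1 - fA 1 with hc_def
  have hc : 0 < c := by simp [hc_def]; linarith
  -- continuity of fC - fA at 1
  have hfun : (fun y => fC y - fA y) =
      fun y => ρ * (1 - β * (1 - y)) / (a + ρ * (1 - β * (1 - y)))
        - ρ * (1 + β * y) / (a + 1) := funext fun y => by rw [hfA, hfC]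
  have hGcont : ContinuousAt (fun y => fC y - fA y) 1 := by
    rw [hfun]
    apply ContinuousAt.sub
    · apply ContinuousAt.div (by fun_prop) (by fun_prop)
      simp; nlinarith
    · fun_prop
  have hev : ∀ᶠ y in nhds (1:ℝ), c / 2 < fC y - fA y :=
    hGcont.eventually (eventually_gt_nhds (by simp [hc_def]; linarith))
  rw [Metric.eventually_nhds_iff] at hev
  obtain ⟨δ0, hδ0, hball⟩ := hev
  set δ : ℝ := min δ0 1 / 2 with hδ_def
  have hδpos : 0 < δ := by positivity
  have hδlt : δ < δ0 := by
    have : min δ0 1 ≤ δ0 := min_le_left _ _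
    simp only [hδ_def]; linarith
  have hδhalf : δ ≤ 1 / 2 := by
    have : min δ0 1 ≤ 1 := min_le_right _ _
    simp only [hδ_def]; linarith
  -- on [1-δ, 1] : fC - fA > c/2
  have hG : ∀ y ∈ Icc (1 - δ) 1, c / 2 < fC y - fA y := by
    intro y hy
    apply hball
    rw [Real.dist_eq, abs_lt]
    constructor <;> [linarith [hy.1]; linarith [hy.2]]
  -- lower bound on F
  have hFlb : ∀ y ∈ Icc (1 - δ) 1, c / 4 * (1 - y) ≤ F y := by
    intro y hy
    rw [hF]
    have h1 : (1:ℝ)/2 ≤ y := by linarith [hy.1]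
    have h2 : 0 ≤ 1 - y := by linarith [hy.2]
    have h3 := hG y hy
    have key : c / 4 ≤ y * (fC y - fA y) := by
      nlinarith [mul_nonneg (by linarith : (0:ℝ) ≤ y - 1/2)
        (by linarith : (0:ℝ) ≤ fC y - fA y - c/2)]
    calc c / 4 * (1 - y) ≤ (y * (fC y - fA y)) * (1 - y) :=
          mul_le_mul_of_nonneg_right key h2
      _ = y * (1 - y) * (fC y - fA y) := by ring
  set M : ℝ := ρ / a + 2 with hM_def
  have hMpos : 0 < M := by positivity
  -- upper bound on F
  have hFub : ∀ y ∈ Icc (1 - δ) 1, F y ≤ M * (1 - y) := by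
    intro y hy
    have h1 : (1:ℝ)/2 ≤ y := by linarith [hy.1]
    have h2 : 0 ≤ 1 - y := by linarith [hy.2]
    have hy2 : y ≤ 1 := hy.2
    have hb1 : β * (1 - y) ≤ 1 - y := by nlinarith [mul_nonneg (by linarith : (0:ℝ) ≤ 1 - β) h2]
    have hb0 : 0 ≤ β * (1 - y) := mul_nonneg hβ0.le h2
    have hnum : 0 ≤ ρ * (1 - β * (1 - y)) := by
      apply mul_nonneg hρ0.le; nlinarith
    have hden : 0 < a + ρ * (1 - β * (1 - y)) := by nlinarith
    have hfCub : fC y ≤ ρ / a := by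
      rw [hfC, div_le_div_iff₀ hden ha]
      nlinarith [mul_nonneg (mul_nonneg hρ0.le hb0) ha.le, mul_nonneg hρ0.le hnum]
    have hfAnn : 0 ≤ fA y := by
      rw [hfA]
      apply div_nonneg (by nlinarith) (by linarith)
    have hGub : fC y - fA y ≤ M := by
      simp only [hM_def]; linarith
    have hGlb : 0 ≤ fC y - fA y := le_of_lt (lt_of_le_of_lt (by positivity) (hG y hy))
    rw [hF]
    have key : y * (fC y - fA y) ≤ M := by nlinarith [mul_le_mul hy.2 hGub hGlb (by linarith : (0:ℝ) ≤ (1:ℝ))]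
    calc y * (1 - y) * (fC y - fA y) = (y * (fC y - fA y)) * (1 - y) := by ring
      _ ≤ M * (1 - y) := mul_le_mul_of_nonneg_right key h2
  refine ⟨δ, hδpos, fun x hx hx0 => ?_⟩
  have hxc : Continuous x := continuous_iff_continuousAt.mpr fun t => (hx t).continuousAt
  -- invariance
  have inv : ∀ t, 0 ≤ t → x t ∈ Ioo (1 - δ) 1 := by
    by_contra hcon
    push_neg at hcon
    obtain ⟨t1, ht1, hxt1⟩ := hcon
    set S : Set ℝ := {t | 0 ≤ t ∧ x t ∉ Ioo (1 - δ) 1} with hS_def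
    have hS_closed : IsClosed S := by
      have : S = Ici 0 ∩ x ⁻¹' (Ioo (1 - δ) 1)ᶜ := rfl
      rw [this]
      exact isClosed_Ici.inter ((isOpen_Ioo.preimage hxc).isClosed_compl)
    have hSne : S.Nonempty := ⟨t1, ht1, hxt1⟩
    have hbdd : BddBelow S := ⟨0, fun t ht => ht.1⟩
    set t0 : ℝ := sInf S with ht0_def
    have ht0S : t0 ∈ S := hS_closed.csInf_mem hSne hbdd
    have ht0nn : 0 ≤ t0 := ht0S.1
    have ht0pos : 0 < t0 := by
      rcases eq_or_lt_of_le ht0nn with heq | hlt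
      · exact absurd hx0 (by rw [← heq] at ht0S; exact ht0S.2)
      · exact hlt
    have hbefore : ∀ s ∈ Ico 0 t0, x s ∈ Ioo (1 - δ) 1 := by
      intro s hs
      by_contra hn
      exact absurd (csInf_le hbdd ⟨hs.1, hn⟩) (not_le.mpr hs.2)
    have hmono : MonotoneOn x (Icc 0 t0) := by
      apply monotoneOn_of_deriv_nonneg (convex_Icc _ _) hxc.continuousOn
        (fun s _ => (hx s).differentiableAt.differentiableWithinAt)
      intro s hs
      rw [interior_Icc] at hs
      rw [(hx s).deriv]
      have hxs := hbefore s ⟨hs.1.le, hs.2⟩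
      have hlb := hFlb (x s) ⟨hxs.1.le, hxs.2.le⟩
      nlinarith [mul_nonneg hc.le (by linarith [hxs.2] : (0:ℝ) ≤ 1 - x s)]
    have hxt0_gt : 1 - δ < x t0 :=
      lt_of_lt_of_le hx0.1 (hmono ⟨le_refl 0, ht0nn⟩ ⟨ht0nn, le_refl t0⟩ ht0nn)
    have hxt0_le : x t0 ≤ 1 := by
      have htend : Tendsto x (nhdsWithin t0 (Iio t0)) (nhds (x t0)) :=
        (hxc.tendsto t0).mono_left nhdsWithin_le_nhds
      apply le_of_tendsto htend
      filter_upwards [Ioo_mem_nhdsLT_of_mem (⟨ht0pos, le_refl t0⟩ : t0 ∈ Ioc 0 t0)] with s hs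
      exact (hbefore s ⟨hs.1.le, hs.2⟩).2.le
    have hxt0 : x t0 = 1 := by
      rcases lt_or_eq_of_le hxt0_le with hlt | heq
      · exact absurd ⟨hxt0_gt, hlt⟩ ht0S.2
      · exact heq
    -- all values in [0, t0] lie in [1-δ, 1]
    have hIcc : ∀ s ∈ Icc 0 t0, x s ∈ Icc (1 - δ) 1 := by
      intro s hs
      constructor
      · exact le_trans hx0.1.le (hmono ⟨le_refl 0, ht0nn⟩ hs hs.1)
      · rw [← hxt0]; exact hmono hs ⟨ht0nn, le_refl t0⟩ hs.2
    -- Gronwall on v s = 1 - x (t0 - s)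
    set v : ℝ → ℝ := fun s => 1 - x (t0 - s) with hv_def
    have hv_deriv : ∀ s : ℝ, HasDerivAt v (F (x (t0 - s))) s := by
      intro s
      have hinner : HasDerivAt (fun s : ℝ => t0 - s) (-1) s := by
        simpa using (hasDerivAt_id s).const_sub t0
      have hcomp := (hx (t0 - s)).comp s hinner
      have := hcomp.const_sub 1
      simpa [hv_def, Function.comp] using this
    have hvcont : Continuous v := continuous_const.sub (hxc.comp (continuous_const.sub continuous_id))
    have hgron := norm_le_gronwallBound_of_norm_deriv_right_le
      (f := v) (f' := fun s => F (x (t0 - s))) (δ := 0) (K := M) (ε := 0) (a := 0) (b := t0)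
      hvcont.continuousOn
      (fun s _ => (hv_deriv s).hasDerivWithinAt)
      (by simp [hv_def, hxt0])
      ?_
    · have hle := hgron t0 ⟨ht0nn, le_refl t0⟩
      rw [gronwallBound_ε0_δ0, Real.norm_eq_abs] at hle
      have hv0 : v t0 = 1 - x 0 := by simp [hv_def]
      rw [hv0] at hle
      have habs : |1 - x 0| = 0 := le_antisymm hle (abs_nonneg _)
      rw [abs_eq_zero] at habs
      linarith [hx0.2]
    · intro s hs
      have hts : t0 - s ∈ Icc 0 t0 := ⟨by linarith [hs.2], by linarith [hs.1]⟩
      have hmem := hIcc (t0 - s) hts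
      have hub := hFub (x (t0 - s)) hmem
      have hlb := hFlb (x (t0 - s)) hmem
      have h1 : 0 ≤ F (x (t0 - s)) :=
        le_trans (by nlinarith [mul_nonneg hc.le (by linarith [hmem.2] : (0:ℝ) ≤ 1 - x (t0 - s))]) hlb
      have h2 : 0 ≤ v s := by simp only [hv_def]; linarith [hmem.2]
      rw [Real.norm_eq_abs, Real.norm_eq_abs, abs_of_nonneg h1, abs_of_nonneg h2]
      have : v s = 1 - x (t0 - s) := rfl
      rw [this]
      linarith
  -- monotone on [0, ∞)
  have hmono2 : MonotoneOn x (Ici 0) := by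
    apply monotoneOn_of_deriv_nonneg (convex_Ici 0) hxc.continuousOn
      (fun s _ => (hx s).differentiableAt.differentiableWithinAt)
    intro s hs
    rw [interior_Ici] at hs
    rw [(hx s).deriv]
    have hxs := inv s hs.le
    have hlb := hFlb (x s) ⟨hxs.1.le, hxs.2.le⟩
    nlinarith [mul_nonneg hc.le (by linarith [hxs.2] : (0:ℝ) ≤ 1 - x s)]
  rw [Metric.tendsto_atTop]
  intro ε hε
  -- find T with x T > 1 - ε
  have hexT : ∃ T, 0 ≤ T ∧ 1 - ε < x T := by
    by_contra hno
    push_neg at hno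
    set g : ℝ → ℝ := fun t => x t - t * (c / 4 * ε) with hg_def
    have hg_deriv : ∀ t : ℝ, HasDerivAt g (F (x t) - c / 4 * ε) t := fun t =>
      (hx t).sub (hasDerivAt_mul_const (c / 4 * ε))
    have hgmono : MonotoneOn g (Ici 0) := by
      have hgcont : Continuous g := hxc.sub (continuous_id.mul continuous_const)
      apply monotoneOn_of_deriv_nonneg (convex_Ici 0) hgcont.continuousOn
        (fun s _ => (hg_deriv s).differentiableAt.differentiableWithinAt)
      intro s hs
      rw [interior_Ici] at hs
      rw [(hg_deriv s).deriv]
      have hxs := inv s hs.le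
      have hle := hno s hs.le
      have hlb := hFlb (x s) ⟨hxs.1.le, hxs.2.le⟩
      nlinarith [mul_nonneg hc.le (by linarith : (0:ℝ) ≤ 1 - x s - ε)]
    set T : ℝ := 8 / (c * ε) with hT_def
    have hTpos : 0 < T := by positivity
    have := hgmono (self_mem_Ici) (mem_Ici.mpr hTpos.le) hTpos.le
    have hTval : T * (c / 4 * ε) = 2 := by
      rw [hT_def]; field_simp; ring
    have hg0 : g 0 = x 0 := by simp [hg_def]
    have hgT : g T = x T - 2 := by rw [hg_def]; simp only; rw [hTval]
    have hxT := (inv T hTpos.le).2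
    have hx0gt := hx0.1
    rw [hg0, hgT] at this
    have : 1 - δ < x T - 2 := lt_of_lt_of_le hx0gt this
    linarith
  obtain ⟨T, hT0, hxT⟩ := hexT
  refine ⟨T, fun t ht => ?_⟩
  have ht0 : 0 ≤ t := le_trans hT0 ht
  have h1 : x T ≤ x t := hmono2 (mem_Ici.mpr hT0) (mem_Ici.mpr ht0) ht
  have h2 : x t < 1 := (inv t ht0).2
  rw [Real.dist_eq, abs_lt]
  constructor <;> linarith
end

section
/- If ρ ≥ 1, then the Scenario 1 feedback system ẋ = x(1−x)(f_C(x,β) − f_A(x,β)), β̇ = (x − β)/τ_β has no equilibrium (x*, β*) with x* ∈ (0,1): interior equilibria, and hence coexistence or limit cycles in this system, can only occur when the resource probability satisfies ρ < 1. -/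
/-- If ρ ≥ 1 then the Scenario 1 feedback system has no equilibrium (x*, β*)
with x* ∈ (0,1). -/
theorem scenario1_no_interior_equilibrium_of_rho_ge_one
    (a ρ τβ : ℝ) (ha : 0 < a) (hρ0 : 0 < ρ) (hτ : 0 < τβ)
    (fA fC : ℝ → ℝ → ℝ)
    (hfA : ∀ x b, fA x b = ρ * (1 + b * x) / (a + 1))
    (hfC : ∀ x b, fC x b = ρ * (1 - b * (1 - x)) / (a + ρ * (1 - b * (1 - x))))
    (hρ : 1 ≤ ρ) :
    ∀ xs bs : ℝ, xs ∈ Set.Ioo (0 : ℝ) 1 →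
      ¬(xs * (1 - xs) * (fC xs bs - fA xs bs) = 0 ∧ (xs - bs) / τβ = 0) := by
  rintro xs bs ⟨hx0, hx1⟩ ⟨h1, h2⟩
  have hb : bs = xs := by
    rcases div_eq_zero_iff.mp h2 with h | h
    · linarith
    · exact absurd h (ne_of_gt hτ)
  rw [hfA, hfC, hb] at h1
  have hu : 0 < a + ρ * (1 - xs * (1 - xs)) := by nlinarith
  have hx : 0 < xs * (1 - xs) := mul_pos hx0 (by linarith)
  have hne : ρ * (1 - xs * (1 - xs)) / (a + ρ * (1 - xs * (1 - xs)))
      - ρ * (1 + xs * xs) / (a + 1) < 0 := by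
    rw [sub_neg, div_lt_div_iff₀ hu (by linarith : (0:ℝ) < a + 1)]
    nlinarith [mul_pos hρ0 (mul_pos hx0 hx0), mul_pos hρ0 hx0,
      mul_nonneg (mul_nonneg (sub_nonneg.mpr hρ) hρ0.le)
        (mul_nonneg (by nlinarith : (0:ℝ) ≤ 1 - xs * (1 - xs))
          (by nlinarith : (0:ℝ) ≤ 1 + xs * xs)),
      mul_pos (mul_pos hρ0 ha) hx0]
  have := mul_neg_of_pos_of_neg hx hne
  linarith [h1]
end
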